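/- arXiv:1709.06601 — 7 statements merged into one kernel-verified Lean document; each statement's English description precedes it below -/
import Mathlib

section
/- Let P, Q, U, V ∈ ℝ³ with P·U = 0 and Q·V = 0, let c ∈ ℝ, and let M = M(P,Q,U,V,c). Then for every λ ∈ ℝ, det(M − λI) = γ⁴ − 2(‖P‖²‖Q‖² + ‖U‖²‖V‖²)γ² + (‖P‖²‖Q‖² − ‖U‖²‖V‖²)², where γ = c − λ. -/
open Matrix

/-- Squared-sum Euclidean norm on `ℝ³` (represented as `Fin 3 → ℝ`). -/
noncomputable def norm3 (v : Fin 3 → ℝ) : ℝ := Real.sqrt (v 0 ^ 2 + v 1 ^ 2 + v 2 ^ 2)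

/-- Dot product on `ℝ³`. -/
def dot3 (u v : Fin 3 → ℝ) : ℝ := u 0 * v 0 + u 1 * v 1 + u 2 * v 2

/-- Cross product on `ℝ³`. -/
def cross3 (u v : Fin 3 → ℝ) : Fin 3 → ℝ :=
  ![u 1 * v 2 - u 2 * v 1, u 2 * v 0 - u 0 * v 2, u 0 * v 1 - u 1 * v 0]

/-- The symmetric matrix `M(P,Q,U,V,c)` of the quadratic form associated with a
general predicate.  Components are indexed `1,2,3` in the paper and `0,1,2` here. -/
noncomputable def Mmat (P Q U V : Fin 3 → ℝ) (c : ℝ) : Matrix (Fin 4) (Fin 4) ℝ :=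
  let R : Fin 3 → ℝ := cross3 P Q + cross3 U V
  let T : ℝ := dot3 P Q + dot3 U V
  !![2*(P 2 * Q 2 + U 2 * V 2) - T + c, 2*(P 0 * Q 2 + U 0 * V 2) + R 1,
       2*(P 2 * Q 1 + U 2 * V 1) + R 0, R 2;
     2*(P 0 * Q 2 + U 0 * V 2) + R 1, 2*(P 0 * Q 0 + U 0 * V 0) - T + c,
       2*(P 1 * Q 0 + U 1 * V 0) + R 2, R 0;
     2*(P 2 * Q 1 + U 2 * V 1) + R 0, 2*(P 1 * Q 0 + U 1 * V 0) + R 2,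
       2*(P 1 * Q 1 + U 1 * V 1) - T + c, R 1;
     R 2, R 0, R 1, T + c]


open Matrix in
theorem my_det_fin_four (M : Matrix (Fin 4) (Fin 4) ℝ) :
    M.det =
      M 0 0 * (M 1 1 * (M 2 2 * M 3 3 - M 2 3 * M 3 2)
        - M 1 2 * (M 2 1 * M 3 3 - M 2 3 * M 3 1)
        + M 1 3 * (M 2 1 * M 3 2 - M 2 2 * M 3 1))
      - M 0 1 * (M 1 0 * (M 2 2 * M 3 3 - M 2 3 * M 3 2)
        - M 1 2 * (M 2 0 * M 3 3 - M 2 3 * M 3 0)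
        + M 1 3 * (M 2 0 * M 3 2 - M 2 2 * M 3 0))
      + M 0 2 * (M 1 0 * (M 2 1 * M 3 3 - M 2 3 * M 3 1)
        - M 1 1 * (M 2 0 * M 3 3 - M 2 3 * M 3 0)
        + M 1 3 * (M 2 0 * M 3 1 - M 2 1 * M 3 0))
      - M 0 3 * (M 1 0 * (M 2 1 * M 3 2 - M 2 2 * M 3 1)
        - M 1 1 * (M 2 0 * M 3 2 - M 2 2 * M 3 0)
        + M 1 2 * (M 2 0 * M 3 1 - M 2 1 * M 3 0)) := by
  rw [Matrix.det_succ_row_zero]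
  simp only [Fin.sum_univ_succ, Finset.univ_unique, Finset.sum_singleton, Matrix.det_fin_three,
    Matrix.submatrix_apply, Fin.succAbove, Fin.isValue]
  norm_num [Fin.lt_def, Fin.succ, Fin.castSucc, Fin.castAdd, Fin.castLE,
    show ((⟨2, by omega⟩ : Fin 4) = 2) from rfl, show ((⟨3, by omega⟩ : Fin 4) = 3) from rfl,
    show ((⟨2, by omega⟩ : Fin 3) = 2) from rfl, show (((3 : Fin 4) : ℕ) = 3) from rfl]
  ring

set_option maxHeartbeats 1600000 in
set_option maxRecDepth 16000 in
set_option maxHeartbeats 3200000 in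
/-- with `P·U = 0` and `Q·V = 0`, the characteristic determinant of
`M(P,Q,U,V,c)` is `γ⁴ − 2(‖P‖²‖Q‖² + ‖U‖²‖V‖²)γ² + (‖P‖²‖Q‖² − ‖U‖²‖V‖²)²`
where `γ = c − λ`. -/
theorem statement1 (P Q U V : Fin 3 → ℝ) (hPU : dot3 P U = 0) (hQV : dot3 Q V = 0)
    (c lam : ℝ) :
    (Mmat P Q U V c - lam • (1 : Matrix (Fin 4) (Fin 4) ℝ)).det
      = (c - lam) ^ 4
        - 2 * ((norm3 P) ^ 2 * (norm3 Q) ^ 2 + (norm3 U) ^ 2 * (norm3 V) ^ 2) * (c - lam) ^ 2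
        + ((norm3 P) ^ 2 * (norm3 Q) ^ 2 - (norm3 U) ^ 2 * (norm3 V) ^ 2) ^ 2 := by
  have hP2 : norm3 P ^ 2 = P 0 ^ 2 + P 1 ^ 2 + P 2 ^ 2 := Real.sq_sqrt (by positivity)
  have hQ2 : norm3 Q ^ 2 = Q 0 ^ 2 + Q 1 ^ 2 + Q 2 ^ 2 := Real.sq_sqrt (by positivity)
  have hU2 : norm3 U ^ 2 = U 0 ^ 2 + U 1 ^ 2 + U 2 ^ 2 := Real.sq_sqrt (by positivity)
  have hV2 : norm3 V ^ 2 = V 0 ^ 2 + V 1 ^ 2 + V 2 ^ 2 := Real.sq_sqrt (by positivity)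
  rw [hP2, hQ2, hU2, hV2]
  simp only [dot3] at hPU hQV
  rw [my_det_fin_four]
  simp (config := { maxSteps := 10000000 }) [Mmat, cross3, dot3, Matrix.one_apply, Pi.add_apply]
  linear_combination
    (- 4*Q 2*V 2*(c - lam)^2 + 4*Q 2*U 2^2*V 2^3 + 4*Q 2*U 2^2*V 1^2*V 2 + 4*Q 2*U 2^2*V 0^2*V 2 + 4*Q 2*U 1^2*V 2^3 + 4*Q 2*U 1^2*V 1^2*V 2 + 4*Q 2*U 1^2*V 0^2*V 2 + 4*Q 2*U 0^2*V 2^3 + 4*Q 2*U 0^2*V 1^2*V 2 + 4*Q 2*U 0^2*V 0^2*V 2 - 4*Q 1*V 1*(c - lam)^2 + 4*Q 1*U 2^2*V 1*V 2^2 + 4*Q 1*U 2^2*V 1^3 + 4*Q 1*U 2^2*V 0^2*V 1 + 4*Q 1*U 1^2*V 1*V 2^2 + 4*Q 1*U 1^2*V 1^3 + 4*Q 1*U 1^2*V 0^2*V 1 + 4*Q 1*U 0^2*V 1*V 2^2 + 4*Q 1*U 0^2*V 1^3 + 4*Q 1*U 0^2*V 0^2*V 1 - 4*Q 0*V 0*(c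 - lam)^2 + 4*Q 0*U 2^2*V 0*V 2^2 + 4*Q 0*U 2^2*V 0*V 1^2 + 4*Q 0*U 2^2*V 0^3 + 4*Q 0*U 1^2*V 0*V 2^2 + 4*Q 0*U 1^2*V 0*V 1^2 + 4*Q 0*U 1^2*V 0^3 + 4*Q 0*U 0^2*V 0*V 2^2 + 4*Q 0*U 0^2*V 0*V 1^2 + 4*Q 0*U 0^2*V 0^3 + 4*P 2*Q 2^2*U 2*V 1^2 + 4*P 2*Q 2^2*U 2*V 0^2 - 8*P 2*Q 1*Q 2*U 2*V 1*V 2 + 4*P 2*Q 1^2*U 2*V 2^2 + 4*P 2*Q 1^2*U 2*V 0^2 - 8*P 2*Q 0*Q 2*U 2*V 0*V 2 - 8*P 2*Q 0*Q 1*U 2*V 0*V 1 + 4*P 2*Q 0^2*U 2*V 2^2 + 4*P 2*Q 0^2*U 2*V 1^2 + 4*P 2^2*Q 2^3*V 2 + 4*P 2^2*Q 1*Q 2^2*V 1 + 4*P 2^2*Q 1^2*Q 2*V 2 + 4*P 2^2*Q 1^3*V 1 + 4*P 2^2*Q 0*Q 2^2*V 0 + 4*P 2^2*Q 0*Q 1^2*V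 0 + 4*P 2^2*Q 0^2*Q 2*V 2 + 4*P 2^2*Q 0^2*Q 1*V 1 + 4*P 2^2*Q 0^3*V 0 + 4*P 1*Q 2^2*U 1*V 1^2 + 4*P 1*Q 2^2*U 1*V 0^2 - 8*P 1*Q 1*Q 2*U 1*V 1*V 2 + 4*P 1*Q 1^2*U 1*V 2^2 + 4*P 1*Q 1^2*U 1*V 0^2 - 8*P 1*Q 0*Q 2*U 1*V 0*V 2 - 8*P 1*Q 0*Q 1*U 1*V 0*V 1 + 4*P 1*Q 0^2*U 1*V 2^2 + 4*P 1*Q 0^2*U 1*V 1^2 + 4*P 1^2*Q 2^3*V 2 + 4*P 1^2*Q 1*Q 2^2*V 1 + 4*P 1^2*Q 1^2*Q 2*V 2 + 4*P 1^2*Q 1^3*V 1 + 4*P 1^2*Q 0*Q 2^2*V 0 + 4*P 1^2*Q 0*Q 1^2*V 0 + 4*P 1^2*Q 0^2*Q 2*V 2 + 4*P 1^2*Q 0^2*Q 1*V 1 + 4*P 1^2*Q 0^3*V 0 + 8*P 0*Q 2^2*U 0*V 2^2 + 4*P 0*Q 2^2*U 0*V 1^2 + 4*P 0*Q 2^2*U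 0*V 0^2 + 8*P 0*Q 1*Q 2*U 0*V 1*V 2 + 4*P 0*Q 1^2*U 0*V 2^2 + 8*P 0*Q 1^2*U 0*V 1^2 + 4*P 0*Q 1^2*U 0*V 0^2 + 8*P 0*Q 0*Q 2*U 0*V 0*V 2 + 8*P 0*Q 0*Q 1*U 0*V 0*V 1 + 4*P 0*Q 0^2*U 0*V 2^2 + 4*P 0*Q 0^2*U 0*V 1^2 + 8*P 0*Q 0^2*U 0*V 0^2 + 4*P 0^2*Q 2^3*V 2 + 4*P 0^2*Q 1*Q 2^2*V 1 + 4*P 0^2*Q 1^2*Q 2*V 2 + 4*P 0^2*Q 1^3*V 1 + 4*P 0^2*Q 0*Q 2^2*V 0 + 4*P 0^2*Q 0*Q 1^2*V 0 + 4*P 0^2*Q 0^2*Q 2*V 2 + 4*P 0^2*Q 0^2*Q 1*V 1 + 4*P 0^2*Q 0^3*V 0) * hPU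
    + (8*P 2^2*Q 2*U 2^2*V 2 + 4*P 2^2*Q 2*U 1^2*V 2 + 4*P 2^2*Q 2*U 0^2*V 2 + 8*P 2^2*Q 1*U 2^2*V 1 + 4*P 2^2*Q 1*U 1^2*V 1 + 4*P 2^2*Q 1*U 0^2*V 1 + 8*P 2^2*Q 0*U 2^2*V 0 + 4*P 2^2*Q 0*U 1^2*V 0 + 4*P 2^2*Q 0*U 0^2*V 0 + 8*P 1*P 2*Q 2*U 1*U 2*V 2 + 8*P 1*P 2*Q 1*U 1*U 2*V 1 + 8*P 1*P 2*Q 0*U 1*U 2*V 0 + 4*P 1^2*Q 2*U 2^2*V 2 + 8*P 1^2*Q 2*U 1^2*V 2 + 4*P 1^2*Q 2*U 0^2*V 2 + 4*P 1^2*Q 1*U 2^2*V 1 + 8*P 1^2*Q 1*U 1^2*V 1 + 4*P 1^2*Q 1*U 0^2*V 1 + 4*P 1^2*Q 0*U 2^2*V 0 + 8*P 1^2*Q 0*U 1^2*V 0 + 4*P 1^2*Q 0*U 0^2*V 0 + 4*P 0^2*Q 2*U 2^2*V 2 + 4*P 0^2*Q 2*U 1^2*V 2 + 4*P 0^2*Q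 1*U 2^2*V 1 + 4*P 0^2*Q 1*U 1^2*V 1 + 4*P 0^2*Q 0*U 2^2*V 0 + 4*P 0^2*Q 0*U 1^2*V 0) * hQV
end

section
/- Let P, Q, U, V ∈ ℝ³ with P·U = 0 and Q·V = 0, let c ∈ ℝ, and suppose ‖P‖‖Q‖ ≠ 0, ‖U‖‖V‖ ≠ 0 and ‖P‖‖Q‖ ≠ ‖U‖‖V‖ (ellipsoidal general predicate with distinct products). Then the four real numbers λ_{α,β} = c − (α‖P‖‖Q‖ + β‖U‖‖V‖), α, β ∈ {−1,1}, are pairwise distinct, and the spectrum of M(P,Q,U,V,c) consists of exactly these four distinct real eigenvalues. -/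
open Matrix

set_option maxRecDepth 10000
set_option maxHeartbeats 4000000

lemma mydet4 (A : Matrix (Fin 4) (Fin 4) ℝ) :
    A.det = A 0 0*A 1 1*A 2 2*A 3 3 - A 0 0*A 1 1*A 2 3*A 3 2 - A 0 0*A 1 2*A 2 1*A 3 3 + A 0 0*A 1 2*A 2 3*A 3 1 + A 0 0*A 1 3*A 2 1*A 3 2 - A 0 0*A 1 3*A 2 2*A 3 1 - A 0 1*A 1 0*A 2 2*A 3 3 + A 0 1*A 1 0*A 2 3*A 3 2 + A 0 1*A 1 2*A 2 0*A 3 3 - A 0 1*A 1 2*A 2 3*A 3 0 - A 0 1*A 1 3*A 2 0*A 3 2 + A 0 1*A 1 3*A 2 2*A 3 0 + A 0 2*A 1 0*A 2 1*A 3 3 - A 0 2*A 1 0*A 2 3*A 3 1 - A 0 2*A 1 1*A 2 0*A 3 3 + A 0 2*A 1 1*A 2 3*A 3 0 + A 0 2*A 1 3*A 2 0*A 3 1 - A 0 2*A 1 3*A 2 1*A 3 0 - A 0 3*A 1 0*A 2 1*A 3 2 + A 0 3*A 1 0*A 2 2*A 3 1 + A 0 3*A 1 1*A 2 0*A 3 2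 - A 0 3*A 1 1*A 2 2*A 3 0 - A 0 3*A 1 2*A 2 0*A 3 1 + A 0 3*A 1 2*A 2 1*A 3 0 := by
  rw [Matrix.det_succ_row_zero]
  simp [Fin.sum_univ_succ, Matrix.det_fin_three, Fin.succAbove, Matrix.submatrix_apply,
    show Fin.succ (2 : Fin 3) = (3 : Fin 4) by decide,
    show Fin.castSucc (2 : Fin 3) = (2 : Fin 4) by decide,
    show (if (1 : Fin 4) < Fin.succ (2 : Fin 3) then (1 : Fin 4) else 2) = 1 by decide]
  ring

lemma one4 : (1 : Matrix (Fin 4) (Fin 4) ℝ) = !![1,0,0,0;0,1,0,0;0,0,1,0;0,0,0,1] := by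
  ext i j
  fin_cases i <;> fin_cases j <;> simp [Matrix.one_apply, Matrix.vecHead, Matrix.vecTail]

lemma keydet (P Q U V : Fin 3 → ℝ) (hPU : dot3 P U = 0) (hQV : dot3 Q V = 0)
    (c lam : ℝ) :
    (Mmat P Q U V c - lam • (1 : Matrix (Fin 4) (Fin 4) ℝ)).det
      = ((c - lam) ^ 2 - (P 0 ^ 2 + P 1 ^ 2 + P 2 ^ 2) * (Q 0 ^ 2 + Q 1 ^ 2 + Q 2 ^ 2)
          - (U 0 ^ 2 + U 1 ^ 2 + U 2 ^ 2) * (V 0 ^ 2 + V 1 ^ 2 + V 2 ^ 2)) ^ 2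
        - 4 * ((P 0 ^ 2 + P 1 ^ 2 + P 2 ^ 2) * (Q 0 ^ 2 + Q 1 ^ 2 + Q 2 ^ 2))
            * ((U 0 ^ 2 + U 1 ^ 2 + U 2 ^ 2) * (V 0 ^ 2 + V 1 ^ 2 + V 2 ^ 2)) := by
  simp only [dot3] at hPU hQV
  rw [mydet4]
  rw [one4]
  simp (config := { maxSteps := 100000000 }) only [Mmat, cross3, dot3, Matrix.sub_apply, Matrix.smul_apply, Matrix.one_apply,
    Pi.add_apply, Matrix.cons_val', Matrix.cons_val_zero, Matrix.cons_val_one, Matrix.head_cons,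
    Matrix.empty_val', Matrix.cons_val_fin_one, Matrix.head_fin_const, Matrix.of_apply,
    Matrix.cons_val_two, Matrix.cons_val_three, Matrix.tail_cons, Matrix.head_val',
    Fin.isValue, smul_eq_mul, mul_one, mul_zero]
  norm_num
  linear_combination
    (0 - 4*(Q 2)*(V 2)*lam^2 + 8*(Q 2)*(V 2)*c*lam - 4*(Q 2)*(V 2)*c^2 + 4*(Q 2)*(U 2)^2*(V 2)^3 + 4*(Q 2)*(U 2)^2*(V 1)^2*(V 2) + 4*(Q 2)*(U 2)^2*(V 0)^2*(V 2) + 4*(Q 2)*(U 1)^2*(V 2)^3 + 4*(Q 2)*(U 1)^2*(V 1)^2*(V 2) + 4*(Q 2)*(U 1)^2*(V 0)^2*(V 2) + 4*(Q 2)*(U 0)^2*(V 2)^3 + 4*(Q 2)*(U 0)^2*(V 1)^2*(V 2) + 4*(Q 2)*(U 0)^2*(V 0)^2*(V 2) - 4*(Q 1)*(V 1)*lam^2 + 8*(Q 1)*(V 1)*c*lam - 4*(Q 1)*(V 1)*c^2 + 4*(Q 1)*(U 2)^2*(V 1)*(V 2)^2 + 4*(Q 1)*(U 2)^2*(V 1)^3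 + 4*(Q 1)*(U 2)^2*(V 0)^2*(V 1) + 4*(Q 1)*(U 1)^2*(V 1)*(V 2)^2 + 4*(Q 1)*(U 1)^2*(V 1)^3 + 4*(Q 1)*(U 1)^2*(V 0)^2*(V 1) + 4*(Q 1)*(U 0)^2*(V 1)*(V 2)^2 + 4*(Q 1)*(U 0)^2*(V 1)^3 + 4*(Q 1)*(U 0)^2*(V 0)^2*(V 1) - 4*(Q 0)*(V 0)*lam^2 + 8*(Q 0)*(V 0)*c*lam - 4*(Q 0)*(V 0)*c^2 + 4*(Q 0)*(U 2)^2*(V 0)*(V 2)^2 + 4*(Q 0)*(U 2)^2*(V 0)*(V 1)^2 + 4*(Q 0)*(U 2)^2*(V 0)^3 + 4*(Q 0)*(U 1)^2*(V 0)*(V 2)^2 + 4*(Q 0)*(U 1)^2*(V 0)*(V 1)^2 + 4*(Q 0)*(U 1)^2*(V 0)^3 + 4*(Q 0)*(U 0)^2*(V 0)*(V 2)^2 + 4*(Q 0)*(U 0)^2*(V 0)*(V 1)^2 + 4*(Q 0)*(U 0)^2*(V 0)^3 + 4*(P 2)*(Q 2)^2*(U 2)*(V 1)^2 + 4*(P 2)*(Q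 2)^2*(U 2)*(V 0)^2 - 8*(P 2)*(Q 1)*(Q 2)*(U 2)*(V 1)*(V 2) + 4*(P 2)*(Q 1)^2*(U 2)*(V 2)^2 + 4*(P 2)*(Q 1)^2*(U 2)*(V 0)^2 - 8*(P 2)*(Q 0)*(Q 2)*(U 2)*(V 0)*(V 2) - 8*(P 2)*(Q 0)*(Q 1)*(U 2)*(V 0)*(V 1) + 4*(P 2)*(Q 0)^2*(U 2)*(V 2)^2 + 4*(P 2)*(Q 0)^2*(U 2)*(V 1)^2 + 4*(P 2)^2*(Q 2)^3*(V 2) + 4*(P 2)^2*(Q 1)*(Q 2)^2*(V 1) + 4*(P 2)^2*(Q 1)^2*(Q 2)*(V 2) + 4*(P 2)^2*(Q 1)^3*(V 1) + 4*(P 2)^2*(Q 0)*(Q 2)^2*(V 0) + 4*(P 2)^2*(Q 0)*(Q 1)^2*(V 0) + 4*(P 2)^2*(Q 0)^2*(Q 2)*(V 2) + 4*(P 2)^2*(Q 0)^2*(Q 1)*(V 1) + 4*(P 2)^2*(Q 0)^3*(V 0) + 4*(P 1)*(Q 2)^2*(U 1)*(V 1)^2 + 4*(P 1)*(Q 2)^2*(U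 1)*(V 0)^2 - 8*(P 1)*(Q 1)*(Q 2)*(U 1)*(V 1)*(V 2) + 4*(P 1)*(Q 1)^2*(U 1)*(V 2)^2 + 4*(P 1)*(Q 1)^2*(U 1)*(V 0)^2 - 8*(P 1)*(Q 0)*(Q 2)*(U 1)*(V 0)*(V 2) - 8*(P 1)*(Q 0)*(Q 1)*(U 1)*(V 0)*(V 1) + 4*(P 1)*(Q 0)^2*(U 1)*(V 2)^2 + 4*(P 1)*(Q 0)^2*(U 1)*(V 1)^2 + 4*(P 1)^2*(Q 2)^3*(V 2) + 4*(P 1)^2*(Q 1)*(Q 2)^2*(V 1) + 4*(P 1)^2*(Q 1)^2*(Q 2)*(V 2) + 4*(P 1)^2*(Q 1)^3*(V 1) + 4*(P 1)^2*(Q 0)*(Q 2)^2*(V 0) + 4*(P 1)^2*(Q 0)*(Q 1)^2*(V 0) + 4*(P 1)^2*(Q 0)^2*(Q 2)*(V 2) + 4*(P 1)^2*(Q 0)^2*(Q 1)*(V 1) + 4*(P 1)^2*(Q 0)^3*(V 0) + 8*(P 0)*(Q 2)^2*(U 0)*(V 2)^2 + 4*(P 0)*(Q 2)^2*(U 0)*(V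 1)^2 + 4*(P 0)*(Q 2)^2*(U 0)*(V 0)^2 + 8*(P 0)*(Q 1)*(Q 2)*(U 0)*(V 1)*(V 2) + 4*(P 0)*(Q 1)^2*(U 0)*(V 2)^2 + 8*(P 0)*(Q 1)^2*(U 0)*(V 1)^2 + 4*(P 0)*(Q 1)^2*(U 0)*(V 0)^2 + 8*(P 0)*(Q 0)*(Q 2)*(U 0)*(V 0)*(V 2) + 8*(P 0)*(Q 0)*(Q 1)*(U 0)*(V 0)*(V 1) + 4*(P 0)*(Q 0)^2*(U 0)*(V 2)^2 + 4*(P 0)*(Q 0)^2*(U 0)*(V 1)^2 + 8*(P 0)*(Q 0)^2*(U 0)*(V 0)^2 + 4*(P 0)^2*(Q 2)^3*(V 2) + 4*(P 0)^2*(Q 1)*(Q 2)^2*(V 1) + 4*(P 0)^2*(Q 1)^2*(Q 2)*(V 2) + 4*(P 0)^2*(Q 1)^3*(V 1) + 4*(P 0)^2*(Q 0)*(Q 2)^2*(V 0) + 4*(P 0)^2*(Q 0)*(Q 1)^2*(V 0) + 4*(P 0)^2*(Q 0)^2*(Q 2)*(V 2) + 4*(P 0)^2*(Q 0)^2*(Q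 1)*(V 1) + 4*(P 0)^2*(Q 0)^3*(V 0)) * hPU
    + (0 + 8*(P 2)^2*(Q 2)*(U 2)^2*(V 2) + 4*(P 2)^2*(Q 2)*(U 1)^2*(V 2) + 4*(P 2)^2*(Q 2)*(U 0)^2*(V 2) + 8*(P 2)^2*(Q 1)*(U 2)^2*(V 1) + 4*(P 2)^2*(Q 1)*(U 1)^2*(V 1) + 4*(P 2)^2*(Q 1)*(U 0)^2*(V 1) + 8*(P 2)^2*(Q 0)*(U 2)^2*(V 0) + 4*(P 2)^2*(Q 0)*(U 1)^2*(V 0) + 4*(P 2)^2*(Q 0)*(U 0)^2*(V 0) + 8*(P 1)*(P 2)*(Q 2)*(U 1)*(U 2)*(V 2) + 8*(P 1)*(P 2)*(Q 1)*(U 1)*(U 2)*(V 1) + 8*(P 1)*(P 2)*(Q 0)*(U 1)*(U 2)*(V 0) + 4*(P 1)^2*(Q 2)*(U 2)^2*(V 2) + 8*(P 1)^2*(Q 2)*(U 1)^2*(V 2) + 4*(P 1)^2*(Q 2)*(U 0)^2*(V 2) + 4*(P 1)^2*(Q 1)*(U 2)^2*(V 1) + 8*(P 1)^2*(Q 1)*(U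 1)^2*(V 1) + 4*(P 1)^2*(Q 1)*(U 0)^2*(V 1) + 4*(P 1)^2*(Q 0)*(U 2)^2*(V 0) + 8*(P 1)^2*(Q 0)*(U 1)^2*(V 0) + 4*(P 1)^2*(Q 0)*(U 0)^2*(V 0) + 4*(P 0)^2*(Q 2)*(U 2)^2*(V 2) + 4*(P 0)^2*(Q 2)*(U 1)^2*(V 2) + 4*(P 0)^2*(Q 1)*(U 2)^2*(V 1) + 4*(P 0)^2*(Q 1)*(U 1)^2*(V 1) + 4*(P 0)^2*(Q 0)*(U 2)^2*(V 0) + 4*(P 0)^2*(Q 0)*(U 1)^2*(V 0)) * hQV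


/-- for an ellipsoidal general predicate with `‖P‖‖Q‖ ≠ ‖U‖‖V‖`, the four
numbers `c − (α‖P‖‖Q‖ + β‖U‖‖V‖)`, `α, β ∈ {−1,1}`, are pairwise distinct, and the
spectrum of `M(P,Q,U,V,c)` consists of exactly these four real eigenvalues. -/
theorem statement3 (P Q U V : Fin 3 → ℝ) (hPU : dot3 P U = 0) (hQV : dot3 Q V = 0)
    (c : ℝ) (a b : ℝ) (hadef : a = norm3 P * norm3 Q) (hbdef : b = norm3 U * norm3 V)
    (ha : a ≠ 0) (hb : b ≠ 0) (hab : a ≠ b) :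
    ([c - (a + b), c - (a - b), c - (-a + b), c - (-a - b)] : List ℝ).Pairwise (· ≠ ·)
    ∧ {lam : ℝ | (Mmat P Q U V c - lam • (1 : Matrix (Fin 4) (Fin 4) ℝ)).det = 0}
        = {c - (a + b), c - (a - b), c - (-a + b), c - (-a - b)} := by
  have hann : 0 ≤ a := hadef ▸ mul_nonneg (Real.sqrt_nonneg _) (Real.sqrt_nonneg _)
  have hbnn : 0 ≤ b := hbdef ▸ mul_nonneg (Real.sqrt_nonneg _) (Real.sqrt_nonneg _)
  have hapos : 0 < a := lt_of_le_of_ne hann (Ne.symm ha)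
  have hbpos : 0 < b := lt_of_le_of_ne hbnn (Ne.symm hb)
  have ha2 : a ^ 2 = (P 0 ^ 2 + P 1 ^ 2 + P 2 ^ 2) * (Q 0 ^ 2 + Q 1 ^ 2 + Q 2 ^ 2) := by
    rw [hadef, mul_pow, norm3, norm3, Real.sq_sqrt (by positivity), Real.sq_sqrt (by positivity)]
  have hb2 : b ^ 2 = (U 0 ^ 2 + U 1 ^ 2 + U 2 ^ 2) * (V 0 ^ 2 + V 1 ^ 2 + V 2 ^ 2) := by
    rw [hbdef, mul_pow, norm3, norm3, Real.sq_sqrt (by positivity), Real.sq_sqrt (by positivity)]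
  constructor
  · refine List.Pairwise.cons ?_ (List.Pairwise.cons ?_ (List.Pairwise.cons ?_
      (List.pairwise_singleton _ _))) <;>
      intro x hx <;> fin_cases hx <;> intro h <;>
      first
        | exact hb (by linarith)
        | exact ha (by linarith)
        | exact hab (by linarith)
  · ext lam
    have key := keydet P Q U V hPU hQV c lam
    rw [← ha2, ← hb2] at key
    have factored : (Mmat P Q U V c - lam • (1 : Matrix (Fin 4) (Fin 4) ℝ)).det
        = (lam - (c - (a + b))) * (lam - (c - (a - b)))
          * (lam - (c - (-a + b))) * (lam - (c - (-a - b))) := by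
      rw [key]; ring
    simp only [Set.mem_setOf_eq, factored, Set.mem_insert_iff, Set.mem_singleton_iff,
      mul_eq_zero, sub_eq_zero]
    tauto
end

section
/- Let P, Q, U, V ∈ ℝ³ with P·U = 0 and Q·V = 0, let c ∈ ℝ, and suppose ‖P‖‖Q‖ = 0 and b := ‖U‖‖V‖ ≠ 0 (a toroidal general predicate). Then det(M(P,Q,U,V,c) − λI) = ((λ − (c − b))(λ − (c + b)))² for all λ, so the spectrum of M consists of exactly the two distinct real eigenvalues c − b and c + b, each of algebraic multiplicity two. -/
open Matrix

/-!
If `‖P‖‖Q‖ = 0` then `P = 0` or `Q = 0`, and either way the `P, Q` contributions to `M` vanish,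
so `M = M(0, 0, U, V, c)`. Expanding the determinant of `M(0, 0, U, V, c) - λI` gives
`((λ - c)² - ‖U‖²‖V‖²)² = ((λ - (c - b))(λ - (c + b)))²`, whose roots are `c ± b`.
-/

theorem Matrix.det_fin_four {R : Type*} [CommRing R] (A : Matrix (Fin 4) (Fin 4) R) :
    A.det = A 0 0 * (A 1 1 * A 2 2 * A 3 3 - A 1 1 * A 2 3 * A 3 2 - A 1 2 * A 2 1 * A 3 3
        + A 1 2 * A 2 3 * A 3 1 + A 1 3 * A 2 1 * A 3 2 - A 1 3 * A 2 2 * A 3 1)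
      - A 0 1 * (A 1 0 * A 2 2 * A 3 3 - A 1 0 * A 2 3 * A 3 2 - A 1 2 * A 2 0 * A 3 3
        + A 1 2 * A 2 3 * A 3 0 + A 1 3 * A 2 0 * A 3 2 - A 1 3 * A 2 2 * A 3 0)
      + A 0 2 * (A 1 0 * A 2 1 * A 3 3 - A 1 0 * A 2 3 * A 3 1 - A 1 1 * A 2 0 * A 3 3
        + A 1 1 * A 2 3 * A 3 0 + A 1 3 * A 2 0 * A 3 1 - A 1 3 * A 2 1 * A 3 0)
      - A 0 3 * (A 1 0 * A 2 1 * A 3 2 - A 1 0 * A 2 2 * A 3 1 - A 1 1 * A 2 0 * A 3 2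
        + A 1 1 * A 2 2 * A 3 0 + A 1 2 * A 2 0 * A 3 1 - A 1 2 * A 2 1 * A 3 0) := by
  rw [det_succ_row_zero, Fin.sum_univ_four]
  simp only [det_fin_three, submatrix_apply, Fin.succAbove, Fin.reduceLT, Fin.reduceCastSucc,
    Fin.reduceSucc, ↓reduceIte, Fin.coe_ofNat_eq_mod]
  ring

lemma norm3_eq_zero_iff {v : Fin 3 → ℝ} : norm3 v = 0 ↔ v = 0 := by
  refine ⟨fun h => ?_, fun h => by simp [h, norm3]⟩
  have hsq : v 0 ^ 2 + v 1 ^ 2 + v 2 ^ 2 = 0 := (Real.sqrt_eq_zero (by positivity)).mp h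
  have h0 : v 0 = 0 := by nlinarith [sq_nonneg (v 0), sq_nonneg (v 1), sq_nonneg (v 2)]
  have h1 : v 1 = 0 := by nlinarith [sq_nonneg (v 0), sq_nonneg (v 1), sq_nonneg (v 2)]
  have h2 : v 2 = 0 := by nlinarith [sq_nonneg (v 0), sq_nonneg (v 1), sq_nonneg (v 2)]
  ext i
  fin_cases i <;> assumption

lemma norm3_sq (v : Fin 3 → ℝ) : norm3 v ^ 2 = dot3 v v := by
  rw [norm3, Real.sq_sqrt (by positivity), dot3]
  ring

lemma Mmat_zero_left (Q U V : Fin 3 → ℝ) (c : ℝ) : Mmat 0 Q U V c = Mmat 0 0 U V c := by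
  simp [Mmat, cross3, dot3]

lemma Mmat_zero_right (P U V : Fin 3 → ℝ) (c : ℝ) : Mmat P 0 U V c = Mmat 0 0 U V c := by
  simp [Mmat, cross3, dot3]

lemma det_Mmat_zero_zero_sub_smul_one (U V : Fin 3 → ℝ) (c lam : ℝ) :
    (Mmat 0 0 U V c - lam • (1 : Matrix (Fin 4) (Fin 4) ℝ)).det
      = ((lam - c) ^ 2 - dot3 U U * dot3 V V) ^ 2 := by
  rw [det_fin_four]
  simp only [Mmat, cross3, dot3, Pi.zero_apply, Pi.add_apply, Matrix.sub_apply,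
    Matrix.smul_apply, one_apply, of_apply, cons_val', cons_val_zero, cons_val_one, cons_val,
    cons_val_fin_one, Fin.isValue, Fin.reduceEq, ↓reduceIte, smul_eq_mul]
  ring

lemma setOf_sq_mul_sub_eq_zero {R : Type*} [CommRing R] [IsDomain R] (x y : R) :
    {t : R | ((t - x) * (t - y)) ^ 2 = 0} = {x, y} := by
  ext t
  simp [sub_eq_zero]

theorem statement4_general (P Q U V : Fin 3 → ℝ)
    (c : ℝ) (ha : norm3 P * norm3 Q = 0)
    (b : ℝ) (hbdef : b = norm3 U * norm3 V) (hb : b ≠ 0) :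
    (∀ lam : ℝ, (Mmat P Q U V c - lam • (1 : Matrix (Fin 4) (Fin 4) ℝ)).det
        = ((lam - (c - b)) * (lam - (c + b))) ^ 2)
    ∧ c - b ≠ c + b
    ∧ {lam : ℝ | (Mmat P Q U V c - lam • (1 : Matrix (Fin 4) (Fin 4) ℝ)).det = 0}
        = {c - b, c + b} := by
  have hM : Mmat P Q U V c = Mmat 0 0 U V c := by
    rcases mul_eq_zero.mp ha with hP | hQ
    · rw [norm3_eq_zero_iff.mp hP, Mmat_zero_left]
    · rw [norm3_eq_zero_iff.mp hQ, Mmat_zero_right]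
  have hdet : ∀ lam : ℝ, (Mmat P Q U V c - lam • (1 : Matrix (Fin 4) (Fin 4) ℝ)).det
      = ((lam - (c - b)) * (lam - (c + b))) ^ 2 := fun lam => by
    rw [hM, det_Mmat_zero_zero_sub_smul_one, ← norm3_sq, ← norm3_sq, hbdef]
    ring
  refine ⟨hdet, fun h => hb (by linarith), ?_⟩
  simp_rw [hdet]
  exact setOf_sq_mul_sub_eq_zero _ _

/-- for a toroidal general predicate with `‖P‖‖Q‖ = 0` and `b = ‖U‖‖V‖ ≠ 0`,
the characteristic determinant factors as `((λ − (c − b))(λ − (c + b)))²`, so the spectrum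
of `M` consists of exactly the two distinct eigenvalues `c − b` and `c + b`, each of
algebraic multiplicity two. -/
theorem statement4 (P Q U V : Fin 3 → ℝ) (hPU : dot3 P U = 0) (hQV : dot3 Q V = 0)
    (c : ℝ) (ha : norm3 P * norm3 Q = 0)
    (b : ℝ) (hbdef : b = norm3 U * norm3 V) (hb : b ≠ 0) :
    (∀ lam : ℝ, (Mmat P Q U V c - lam • (1 : Matrix (Fin 4) (Fin 4) ℝ)).det
        = ((lam - (c - b)) * (lam - (c + b))) ^ 2)
    ∧ c - b ≠ c + b
    ∧ {lam : ℝ | (Mmat P Q U V c - lam • (1 : Matrix (Fin 4) (Fin 4) ℝ)).det = 0}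
        = {c - b, c + b} :=
  statement4_general P Q U V c ha b hbdef hb
end

section
/- Let P, Q, U, V ∈ ℝ³ be nonzero vectors with P·U = 0 and Q·V = 0, let c ∈ ℝ, and let α, β ∈ {−1,1}. Write X̂ = X/‖X‖ for a nonzero vector X. Define D = αβ (P̂×Û)×(Q̂×V̂) − α (P̂×Q̂) − β (Û×V̂) ∈ ℝ³ and d = αβ (P̂×Û)·(Q̂×V̂) − α (P̂·Q̂) − β (Û·V̂) + 1 ∈ ℝ, and set W = (D₃, D₁, D₂, d)ᵀ ∈ ℝ⁴. Then M(P,Q,U,V,c) · W = (c − (α‖P‖‖Q‖ + β‖U‖‖V‖)) · W; in particular, whenever d ≠ 0, W is an eigenvector of M for the eigenvalue c − (α‖P‖‖Q‖ + β‖U‖‖V‖). -/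
open Matrix

set_option maxRecDepth 16000
set_option maxHeartbeats 2000000

/-- Normalization of a vector in `ℝ³`. -/
noncomputable def nz3 (v : Fin 3 → ℝ) : Fin 3 → ℝ := (norm3 v)⁻¹ • v


private lemma sumsq_pos (v : Fin 3 → ℝ) (h : v ≠ 0) : 0 < v 0 ^ 2 + v 1 ^ 2 + v 2 ^ 2 := by
  rcases lt_or_eq_of_le (by positivity : (0:ℝ) ≤ v 0 ^ 2 + v 1 ^ 2 + v 2 ^ 2) with h' | h'
  · exact h'
  · exfalso
    apply h
    have h0 : v 0 = 0 := by nlinarith [sq_nonneg (v 0), sq_nonneg (v 1), sq_nonneg (v 2)]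
    have h1 : v 1 = 0 := by nlinarith [sq_nonneg (v 0), sq_nonneg (v 1), sq_nonneg (v 2)]
    have h2 : v 2 = 0 := by nlinarith [sq_nonneg (v 0), sq_nonneg (v 1), sq_nonneg (v 2)]
    funext i
    fin_cases i <;> simp [h0, h1, h2]

/-- in the ellipsoidal case, the vector `W = (D₃, D₁, D₂, d)` built from
`D = αβ (P̂×Û)×(Q̂×V̂) − α P̂×Q̂ − β Û×V̂` and
`d = αβ (P̂×Û)·(Q̂×V̂) − α P̂·Q̂ − β Û·V̂ + 1` satisfies
`M W = (c − (α‖P‖‖Q‖ + β‖U‖‖V‖)) W`; in particular when `d ≠ 0` it is an eigenvector. -/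
theorem statement9 (P Q U V : Fin 3 → ℝ)
    (hP : P ≠ 0) (hQ : Q ≠ 0) (hU : U ≠ 0) (hV : V ≠ 0)
    (hPU : dot3 P U = 0) (hQV : dot3 Q V = 0) (c : ℝ)
    (α β : ℝ) (hα : α = -1 ∨ α = 1) (hβ : β = -1 ∨ β = 1)
    (D : Fin 3 → ℝ) (d : ℝ)
    (hD : D = (α * β) • cross3 (cross3 (nz3 P) (nz3 U)) (cross3 (nz3 Q) (nz3 V))
            - α • cross3 (nz3 P) (nz3 Q) - β • cross3 (nz3 U) (nz3 V))
    (hd : d = α * β * dot3 (cross3 (nz3 P) (nz3 U)) (cross3 (nz3 Q) (nz3 V))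
            - α * dot3 (nz3 P) (nz3 Q) - β * dot3 (nz3 U) (nz3 V) + 1) :
    (Mmat P Q U V c).mulVec ![D 2, D 0, D 1, d]
        = (c - (α * (norm3 P * norm3 Q) + β * (norm3 U * norm3 V))) • ![D 2, D 0, D 1, d]
    ∧ (d ≠ 0 → ![D 2, D 0, D 1, d] ≠ 0) := by
  have hα2 : α ^ 2 = 1 := by rcases hα with h | h <;> rw [h] <;> norm_num
  have hβ2 : β ^ 2 = 1 := by rcases hβ with h | h <;> rw [h] <;> norm_num
  subst hD hd
  set a := nz3 P with haP
  set b := nz3 Q with hbQ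
  set e := nz3 U with heU
  set f := nz3 V with hfV
  set np := norm3 P with hnpd
  set nq := norm3 Q with hnqd
  set nu := norm3 U with hnud
  set nv := norm3 V with hnvd
  have hp3 : 0 < P 0 ^ 2 + P 1 ^ 2 + P 2 ^ 2 := sumsq_pos P hP
  have hq3 : 0 < Q 0 ^ 2 + Q 1 ^ 2 + Q 2 ^ 2 := sumsq_pos Q hQ
  have hu3 : 0 < U 0 ^ 2 + U 1 ^ 2 + U 2 ^ 2 := sumsq_pos U hU
  have hv3 : 0 < V 0 ^ 2 + V 1 ^ 2 + V 2 ^ 2 := sumsq_pos V hV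
  have hnp : (0:ℝ) < np := by rw [hnpd, norm3]; exact Real.sqrt_pos.mpr hp3
  have hnq : (0:ℝ) < nq := by rw [hnqd, norm3]; exact Real.sqrt_pos.mpr hq3
  have hnu : (0:ℝ) < nu := by rw [hnud, norm3]; exact Real.sqrt_pos.mpr hu3
  have hnv : (0:ℝ) < nv := by rw [hnvd, norm3]; exact Real.sqrt_pos.mpr hv3
  have hnp2 : np ^ 2 = P 0 ^ 2 + P 1 ^ 2 + P 2 ^ 2 := by
    rw [hnpd, norm3]; exact Real.sq_sqrt hp3.le
  have hnq2 : nq ^ 2 = Q 0 ^ 2 + Q 1 ^ 2 + Q 2 ^ 2 := by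
    rw [hnqd, norm3]; exact Real.sq_sqrt hq3.le
  have hnu2 : nu ^ 2 = U 0 ^ 2 + U 1 ^ 2 + U 2 ^ 2 := by
    rw [hnud, norm3]; exact Real.sq_sqrt hu3.le
  have hnv2 : nv ^ 2 = V 0 ^ 2 + V 1 ^ 2 + V 2 ^ 2 := by
    rw [hnvd, norm3]; exact Real.sq_sqrt hv3.le
  have hPa : ∀ i, P i = np * a i := by
    intro i; rw [haP]
    simp only [nz3, Pi.smul_apply, smul_eq_mul, ← hnpd]
    rw [← mul_assoc, mul_inv_cancel₀ hnp.ne', one_mul]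
  have hQb : ∀ i, Q i = nq * b i := by
    intro i; rw [hbQ]
    simp only [nz3, Pi.smul_apply, smul_eq_mul, ← hnqd]
    rw [← mul_assoc, mul_inv_cancel₀ hnq.ne', one_mul]
  have hUe : ∀ i, U i = nu * e i := by
    intro i; rw [heU]
    simp only [nz3, Pi.smul_apply, smul_eq_mul, ← hnud]
    rw [← mul_assoc, mul_inv_cancel₀ hnu.ne', one_mul]
  have hVf : ∀ i, V i = nv * f i := by
    intro i; rw [hfV]
    simp only [nz3, Pi.smul_apply, smul_eq_mul, ← hnvd]
    rw [← mul_assoc, mul_inv_cancel₀ hnv.ne', one_mul]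
  have ha1 : a 0 ^ 2 + a 1 ^ 2 + a 2 ^ 2 = 1 := by
    have h := hnp2; rw [hPa 0, hPa 1, hPa 2] at h
    have h2 : np ^ 2 * (a 0 ^ 2 + a 1 ^ 2 + a 2 ^ 2) = np ^ 2 * 1 := by linear_combination -h
    exact mul_left_cancel₀ (pow_ne_zero 2 hnp.ne') h2
  have hb1 : b 0 ^ 2 + b 1 ^ 2 + b 2 ^ 2 = 1 := by
    have h := hnq2; rw [hQb 0, hQb 1, hQb 2] at h
    have h2 : nq ^ 2 * (b 0 ^ 2 + b 1 ^ 2 + b 2 ^ 2) = nq ^ 2 * 1 := by linear_combination -h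
    exact mul_left_cancel₀ (pow_ne_zero 2 hnq.ne') h2
  have he1 : e 0 ^ 2 + e 1 ^ 2 + e 2 ^ 2 = 1 := by
    have h := hnu2; rw [hUe 0, hUe 1, hUe 2] at h
    have h2 : nu ^ 2 * (e 0 ^ 2 + e 1 ^ 2 + e 2 ^ 2) = nu ^ 2 * 1 := by linear_combination -h
    exact mul_left_cancel₀ (pow_ne_zero 2 hnu.ne') h2
  have hf1 : f 0 ^ 2 + f 1 ^ 2 + f 2 ^ 2 = 1 := by
    have h := hnv2; rw [hVf 0, hVf 1, hVf 2] at h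
    have h2 : nv ^ 2 * (f 0 ^ 2 + f 1 ^ 2 + f 2 ^ 2) = nv ^ 2 * 1 := by linear_combination -h
    exact mul_left_cancel₀ (pow_ne_zero 2 hnv.ne') h2
  have hae : a 0 * e 0 + a 1 * e 1 + a 2 * e 2 = 0 := by
    have h : P 0 * U 0 + P 1 * U 1 + P 2 * U 2 = 0 := hPU
    rw [hPa 0, hPa 1, hPa 2, hUe 0, hUe 1, hUe 2] at h
    have h2 : (np * nu) * (a 0 * e 0 + a 1 * e 1 + a 2 * e 2) = (np * nu) * 0 := by
      linear_combination h
    exact mul_left_cancel₀ (mul_pos hnp hnu).ne' h2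
  have hbf : b 0 * f 0 + b 1 * f 1 + b 2 * f 2 = 0 := by
    have h : Q 0 * V 0 + Q 1 * V 1 + Q 2 * V 2 = 0 := hQV
    rw [hQb 0, hQb 1, hQb 2, hVf 0, hVf 1, hVf 2] at h
    have h2 : (nq * nv) * (b 0 * f 0 + b 1 * f 1 + b 2 * f 2) = (nq * nv) * 0 := by
      linear_combination h
    exact mul_left_cancel₀ (mul_pos hnq hnv).ne' h2
  refine ⟨?_, fun hd0 h0 => hd0 (by simpa using congrFun h0 3)⟩
  funext i
  fin_cases i
  · simp only [Mmat, cross3, dot3, Matrix.mulVec, dotProduct, Fin.sum_univ_four,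
      Matrix.cons_val', Matrix.cons_val_zero, Matrix.cons_val_one, Matrix.head_cons,
      Matrix.empty_val', Matrix.cons_val_fin_one, Matrix.of_apply, Matrix.head_fin_const,
      Pi.sub_apply, Pi.smul_apply, Pi.add_apply, smul_eq_mul, Matrix.cons_val_two,
      Matrix.cons_val_three, Matrix.tail_cons, Fin.reduceFinMk, Fin.isValue, Fin.zero_eta,
      Fin.mk_one, Pi.zero_apply, hPa, hQb, hUe, hVf]
    linear_combination ((-1)*(β)*(a 2)*(b 2)*(e 1)*(f 0)*(np)*(nq) + (β)*(a 1)*(b 2)*(e 2)*(f 0)*(np)*(nq) + (β)*(a 2)*(b 2)*(e 0)*(f 1)*(np)*(nq) + (-1)*(β)*(a 0)*(b 2)*(e 2)*(f 1)*(np)*(nq) + (-1)*(β)*(a 2)*(b 1)*(e 0)*(f 2)*(np)*(nq) + (β)*(a 2)*(b 0)*(e 1)*(f 2)*(np)*(nq) + (-1)*(β)*(a 1)*(b 0)*(e 2)*(f 2)*(np)*(nq) + (β)*(a 0)*(b 1)*(e 2)*(f 2)*(np)*(nq) + (a 1)*(b 0)*(np)*(nq) + (-1)*(a 0)*(b 1)*(np)*(nq))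 * hα2 +
        ((-1)*(α)*(a 2)*(b 2)*(e 1)*(f 0)*(nu)*(nv) + (α)*(a 1)*(b 2)*(e 2)*(f 0)*(nu)*(nv) + (α)*(a 2)*(b 2)*(e 0)*(f 1)*(nu)*(nv) + (-1)*(α)*(a 0)*(b 2)*(e 2)*(f 1)*(nu)*(nv) + (-1)*(α)*(a 2)*(b 1)*(e 0)*(f 2)*(nu)*(nv) + (α)*(a 2)*(b 0)*(e 1)*(f 2)*(nu)*(nv) + (-1)*(α)*(a 1)*(b 0)*(e 2)*(f 2)*(nu)*(nv) + (α)*(a 0)*(b 1)*(e 2)*(f 2)*(nu)*(nv) + (e 1)*(f 0)*(nu)*(nv) + (-1)*(e 0)*(f 1)*(nu)*(nv)) * hβ2 +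
        ((-1)*(α)*(β)*(b 1)^2*(e 1)*(f 0)*(np)*(nq) + (-1)*(α)*(β)*(b 2)^2*(e 1)*(f 0)*(np)*(nq) + (α)*(β)*(b 0)*(b 1)*(e 1)*(f 1)*(np)*(nq) + (α)*(β)*(b 0)*(b 2)*(e 1)*(f 2)*(np)*(nq) + (α)*(β)*(e 0)*(f 1)*(np)*(nq)) * ha1 +
        ((α)*(β)*(a 1)^2*(e 0)*(f 1)*(np)*(nq) + (α)*(β)*(a 2)^2*(e 0)*(f 1)*(np)*(nq) + (-1)*(α)*(β)*(a 0)*(a 1)*(e 1)*(f 1)*(np)*(nq) + (-1)*(α)*(β)*(a 0)*(a 2)*(e 2)*(f 1)*(np)*(nq) + (-1)*(α)*(β)*(e 1)*(f 0)*(np)*(nq)) * hb1 +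
        ((α)*(β)*(a 1)*(b 1)*(f 0)*(f 1)*(nu)*(nv) + (-1)*(α)*(β)*(a 1)*(b 0)*(f 1)^2*(nu)*(nv) + (α)*(β)*(a 1)*(b 2)*(f 0)*(f 2)*(nu)*(nv) + (-1)*(α)*(β)*(a 1)*(b 0)*(f 2)^2*(nu)*(nv) + (α)*(β)*(a 0)*(b 1)*(nu)*(nv)) * he1 +
        ((-1)*(α)*(β)*(a 1)*(b 1)*(e 0)*(e 1)*(nu)*(nv) + (α)*(β)*(a 0)*(b 1)*(e 1)^2*(nu)*(nv) + (-1)*(α)*(β)*(a 2)*(b 1)*(e 0)*(e 2)*(nu)*(nv) + (α)*(β)*(a 0)*(b 1)*(e 2)^2*(nu)*(nv) + (-1)*(α)*(β)*(a 1)*(b 0)*(nu)*(nv)) * hf1 +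
        ((α)*(β)*(a 1)*(b 1)^2*(f 0)*(np)*(nq) + (α)*(β)*(a 1)*(b 2)^2*(f 0)*(np)*(nq) + (-1)*(α)*(β)*(a 1)*(b 0)*(b 1)*(f 1)*(np)*(nq) + (-1)*(α)*(β)*(a 1)*(b 0)*(b 2)*(f 2)*(np)*(nq) + (-1)*(α)*(β)*(b 1)*(e 1)*(f 0)*(f 1)*(nu)*(nv) + (α)*(β)*(b 0)*(e 1)*(f 1)^2*(nu)*(nv) + (-1)*(α)*(β)*(b 2)*(e 1)*(f 0)*(f 2)*(nu)*(nv) + (α)*(β)*(b 0)*(e 1)*(f 2)^2*(nu)*(nv) + (-1)*(α)*(β)*(a 0)*(f 1)*(np)*(nq) + (-1)*(α)*(β)*(b 1)*(e 0)*(nu)*(nv) + (-1)*(β)*(b 1)*(f 0)*(np)*(nq) + (β)*(b 0)*(f 1)*(np)*(nq) + (α)*(b 1)*(f 0)*(nu)*(nv) + (-1)*(α)*(b 0)*(f 1)*(nu)*(nv)) * hae +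
        ((-1)*(α)*(β)*(a 1)^2*(b 1)*(e 0)*(np)*(nq) + (-1)*(α)*(β)*(a 2)^2*(b 1)*(e 0)*(np)*(nq) + (α)*(β)*(a 0)*(a 1)*(b 1)*(e 1)*(np)*(nq) + (α)*(β)*(a 0)*(a 2)*(b 1)*(e 2)*(np)*(nq) + (α)*(β)*(a 1)*(e 0)*(e 1)*(f 1)*(nu)*(nv) + (-1)*(α)*(β)*(a 0)*(e 1)^2*(f 1)*(nu)*(nv) + (α)*(β)*(a 2)*(e 0)*(e 2)*(f 1)*(nu)*(nv) + (-1)*(α)*(β)*(a 0)*(e 2)^2*(f 1)*(nu)*(nv) + (α)*(β)*(b 0)*(e 1)*(np)*(nq) + (α)*(β)*(a 1)*(f 0)*(nu)*(nv) + (β)*(a 1)*(e 0)*(np)*(nq) + (-1)*(β)*(a 0)*(e 1)*(np)*(nq) + (-1)*(α)*(a 1)*(e 0)*(nu)*(nv) + (α)*(a 0)*(e 1)*(nu)*(nv)) * hbf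
  · simp only [Mmat, cross3, dot3, Matrix.mulVec, dotProduct, Fin.sum_univ_four,
      Matrix.cons_val', Matrix.cons_val_zero, Matrix.cons_val_one, Matrix.head_cons,
      Matrix.empty_val', Matrix.cons_val_fin_one, Matrix.of_apply, Matrix.head_fin_const,
      Pi.sub_apply, Pi.smul_apply, Pi.add_apply, smul_eq_mul, Matrix.cons_val_two,
      Matrix.cons_val_three, Matrix.tail_cons, Fin.reduceFinMk, Fin.isValue, Fin.zero_eta,
      Fin.mk_one, Pi.zero_apply, hPa, hQb, hUe, hVf]
    linear_combination ((-1)*(β)*(a 2)*(b 1)*(e 0)*(f 0)*(np)*(nq) + (β)*(a 1)*(b 2)*(e 0)*(f 0)*(np)*(nq) + (-1)*(β)*(a 0)*(b 2)*(e 1)*(f 0)*(np)*(nq) + (β)*(a 0)*(b 1)*(e 2)*(f 0)*(np)*(nq) + (β)*(a 2)*(b 0)*(e 0)*(f 1)*(np)*(nq) + (-1)*(β)*(a 0)*(b 0)*(e 2)*(f 1)*(np)*(nq) + (-1)*(β)*(a 1)*(b 0)*(e 0)*(f 2)*(np)*(nq) + (β)*(a 0)*(b 0)*(e 1)*(f 2)*(np)*(nq)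 + (a 2)*(b 1)*(np)*(nq) + (-1)*(a 1)*(b 2)*(np)*(nq)) * hα2 +
        ((-1)*(α)*(a 2)*(b 1)*(e 0)*(f 0)*(nu)*(nv) + (α)*(a 1)*(b 2)*(e 0)*(f 0)*(nu)*(nv) + (-1)*(α)*(a 0)*(b 2)*(e 1)*(f 0)*(nu)*(nv) + (α)*(a 0)*(b 1)*(e 2)*(f 0)*(nu)*(nv) + (α)*(a 2)*(b 0)*(e 0)*(f 1)*(nu)*(nv) + (-1)*(α)*(a 0)*(b 0)*(e 2)*(f 1)*(nu)*(nv) + (-1)*(α)*(a 1)*(b 0)*(e 0)*(f 2)*(nu)*(nv) + (α)*(a 0)*(b 0)*(e 1)*(f 2)*(nu)*(nv) + (e 2)*(f 1)*(nu)*(nv) + (-1)*(e 1)*(f 2)*(nu)*(nv)) * hβ2 +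
        ((-1)*(α)*(β)*(b 0)*(b 2)*(e 1)*(f 0)*(np)*(nq) + (α)*(β)*(b 0)*(b 1)*(e 2)*(f 0)*(np)*(nq) + (-1)*(α)*(β)*(b 1)*(b 2)*(e 1)*(f 1)*(np)*(nq) + (-1)*(α)*(β)*(b 0)^2*(e 2)*(f 1)*(np)*(nq) + (-1)*(α)*(β)*(b 2)^2*(e 2)*(f 1)*(np)*(nq) + (α)*(β)*(b 0)^2*(e 1)*(f 2)*(np)*(nq) + (α)*(β)*(b 1)^2*(e 1)*(f 2)*(np)*(nq) + (α)*(β)*(b 1)*(b 2)*(e 2)*(f 2)*(np)*(nq)) * ha1 +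
        ((α)*(β)*(a 0)*(a 2)*(e 0)*(f 1)*(np)*(nq) + (α)*(β)*(a 1)*(a 2)*(e 1)*(f 1)*(np)*(nq) + (α)*(β)*(a 2)^2*(e 2)*(f 1)*(np)*(nq) + (-1)*(α)*(β)*(a 0)*(a 1)*(e 0)*(f 2)*(np)*(nq) + (-1)*(α)*(β)*(a 1)^2*(e 1)*(f 2)*(np)*(nq) + (-1)*(α)*(β)*(a 1)*(a 2)*(e 2)*(f 2)*(np)*(nq) + (-1)*(α)*(β)*(e 2)*(f 1)*(np)*(nq) + (α)*(β)*(e 1)*(f 2)*(np)*(nq)) * hb1 +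
        ((-1)*(α)*(β)*(a 2)*(b 1)*(f 0)^2*(nu)*(nv) + (α)*(β)*(a 1)*(b 2)*(f 0)^2*(nu)*(nv) + (α)*(β)*(a 2)*(b 0)*(f 0)*(f 1)*(nu)*(nv) + (α)*(β)*(a 1)*(b 2)*(f 1)^2*(nu)*(nv) + (-1)*(α)*(β)*(a 1)*(b 0)*(f 0)*(f 2)*(nu)*(nv) + (-1)*(α)*(β)*(a 1)*(b 1)*(f 1)*(f 2)*(nu)*(nv) + (α)*(β)*(a 2)*(b 2)*(f 1)*(f 2)*(nu)*(nv) + (-1)*(α)*(β)*(a 2)*(b 1)*(f 2)^2*(nu)*(nv)) * he1 +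
        ((-1)*(α)*(β)*(a 0)*(b 2)*(e 0)*(e 1)*(nu)*(nv) + (-1)*(α)*(β)*(a 1)*(b 2)*(e 1)^2*(nu)*(nv) + (α)*(β)*(a 0)*(b 1)*(e 0)*(e 2)*(nu)*(nv) + (α)*(β)*(a 1)*(b 1)*(e 1)*(e 2)*(nu)*(nv) + (-1)*(α)*(β)*(a 2)*(b 2)*(e 1)*(e 2)*(nu)*(nv) + (α)*(β)*(a 2)*(b 1)*(e 2)^2*(nu)*(nv) + (-1)*(α)*(β)*(a 2)*(b 1)*(nu)*(nv) + (α)*(β)*(a 1)*(b 2)*(nu)*(nv)) * hf1 +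
        ((-1)*(α)*(β)*(a 2)*(b 0)*(b 1)*(f 0)*(np)*(nq) + (α)*(β)*(a 1)*(b 0)*(b 2)*(f 0)*(np)*(nq) + (-1)*(α)*(β)*(a 2)*(b 1)^2*(f 1)*(np)*(nq) + (α)*(β)*(a 1)*(b 1)*(b 2)*(f 1)*(np)*(nq) + (-1)*(α)*(β)*(a 2)*(b 1)*(b 2)*(f 2)*(np)*(nq) + (α)*(β)*(a 1)*(b 2)^2*(f 2)*(np)*(nq) + (-1)*(α)*(β)*(b 0)*(e 2)*(f 0)*(f 1)*(nu)*(nv) + (-1)*(α)*(β)*(b 1)*(e 2)*(f 1)^2*(nu)*(nv) + (α)*(β)*(b 0)*(e 1)*(f 0)*(f 2)*(nu)*(nv) + (α)*(β)*(b 1)*(e 1)*(f 1)*(f 2)*(nu)*(nv) + (-1)*(α)*(β)*(b 2)*(e 2)*(f 1)*(f 2)*(nu)*(nv) + (α)*(β)*(b 2)*(e 1)*(f 2)^2*(nu)*(nv) + (α)*(β)*(a 2)*(f 1)*(np)*(nq) + (-1)*(α)*(β)*(a 1)*(f 2)*(np)*(nq) + (-1)*(α)*(β)*(b 2)*(e 1)*(nu)*(nv)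 + (α)*(β)*(b 1)*(e 2)*(nu)*(nv) + (-1)*(β)*(b 2)*(f 1)*(np)*(nq) + (β)*(b 1)*(f 2)*(np)*(nq) + (α)*(b 2)*(f 1)*(nu)*(nv) + (-1)*(α)*(b 1)*(f 2)*(nu)*(nv)) * hae +
        ((-1)*(α)*(β)*(b 2)*(e 1)*(np)*(nq) + (α)*(β)*(b 1)*(e 2)*(np)*(nq) + (α)*(β)*(a 2)*(f 1)*(nu)*(nv) + (-1)*(α)*(β)*(a 1)*(f 2)*(nu)*(nv) + (β)*(a 2)*(e 1)*(np)*(nq) + (-1)*(β)*(a 1)*(e 2)*(np)*(nq) + (-1)*(α)*(a 2)*(e 1)*(nu)*(nv) + (α)*(a 1)*(e 2)*(nu)*(nv)) * hbf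
  · simp only [Mmat, cross3, dot3, Matrix.mulVec, dotProduct, Fin.sum_univ_four,
      Matrix.cons_val', Matrix.cons_val_zero, Matrix.cons_val_one, Matrix.head_cons,
      Matrix.empty_val', Matrix.cons_val_fin_one, Matrix.of_apply, Matrix.head_fin_const,
      Pi.sub_apply, Pi.smul_apply, Pi.add_apply, smul_eq_mul, Matrix.cons_val_two,
      Matrix.cons_val_three, Matrix.tail_cons, Fin.reduceFinMk, Fin.isValue, Fin.zero_eta,
      Fin.mk_one, Pi.zero_apply, hPa, hQb, hUe, hVf]
    linear_combination ((-1)*(β)*(a 2)*(b 1)*(e 1)*(f 0)*(np)*(nq) + (β)*(a 1)*(b 1)*(e 2)*(f 0)*(np)*(nq) + (β)*(a 1)*(b 2)*(e 0)*(f 1)*(np)*(nq) + (β)*(a 2)*(b 0)*(e 1)*(f 1)*(np)*(nq) + (-1)*(β)*(a 0)*(b 2)*(e 1)*(f 1)*(np)*(nq) + (-1)*(β)*(a 1)*(b 0)*(e 2)*(f 1)*(np)*(nq) + (-1)*(β)*(a 1)*(b 1)*(e 0)*(f 2)*(np)*(nq) + (β)*(a 0)*(b 1)*(e 1)*(f 2)*(np)*(nq)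 + (-1)*(a 2)*(b 0)*(np)*(nq) + (a 0)*(b 2)*(np)*(nq)) * hα2 +
        ((-1)*(α)*(a 2)*(b 1)*(e 1)*(f 0)*(nu)*(nv) + (α)*(a 1)*(b 1)*(e 2)*(f 0)*(nu)*(nv) + (α)*(a 1)*(b 2)*(e 0)*(f 1)*(nu)*(nv) + (α)*(a 2)*(b 0)*(e 1)*(f 1)*(nu)*(nv) + (-1)*(α)*(a 0)*(b 2)*(e 1)*(f 1)*(nu)*(nv) + (-1)*(α)*(a 1)*(b 0)*(e 2)*(f 1)*(nu)*(nv) + (-1)*(α)*(a 1)*(b 1)*(e 0)*(f 2)*(nu)*(nv) + (α)*(a 0)*(b 1)*(e 1)*(f 2)*(nu)*(nv) + (-1)*(e 2)*(f 0)*(nu)*(nv) + (e 0)*(f 2)*(nu)*(nv)) * hβ2 +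
        ((α)*(β)*(b 1)^2*(e 2)*(f 0)*(np)*(nq) + (α)*(β)*(b 2)^2*(e 2)*(f 0)*(np)*(nq) + (-1)*(α)*(β)*(b 0)*(b 1)*(e 2)*(f 1)*(np)*(nq) + (-1)*(α)*(β)*(b 0)*(b 2)*(e 2)*(f 2)*(np)*(nq) + (-1)*(α)*(β)*(e 0)*(f 2)*(np)*(nq)) * ha1 +
        ((-1)*(α)*(β)*(a 1)^2*(e 0)*(f 2)*(np)*(nq) + (-1)*(α)*(β)*(a 2)^2*(e 0)*(f 2)*(np)*(nq) + (α)*(β)*(a 0)*(a 1)*(e 1)*(f 2)*(np)*(nq) + (α)*(β)*(a 0)*(a 2)*(e 2)*(f 2)*(np)*(nq) + (α)*(β)*(e 2)*(f 0)*(np)*(nq)) * hb1 +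
        ((-1)*(α)*(β)*(a 2)*(b 1)*(f 0)*(f 1)*(nu)*(nv) + (α)*(β)*(a 2)*(b 0)*(f 1)^2*(nu)*(nv) + (-1)*(α)*(β)*(a 2)*(b 2)*(f 0)*(f 2)*(nu)*(nv) + (α)*(β)*(a 2)*(b 0)*(f 2)^2*(nu)*(nv) + (-1)*(α)*(β)*(a 0)*(b 2)*(nu)*(nv)) * he1 +
        ((α)*(β)*(a 1)*(b 2)*(e 0)*(e 1)*(nu)*(nv) + (-1)*(α)*(β)*(a 0)*(b 2)*(e 1)^2*(nu)*(nv) + (α)*(β)*(a 2)*(b 2)*(e 0)*(e 2)*(nu)*(nv) + (-1)*(α)*(β)*(a 0)*(b 2)*(e 2)^2*(nu)*(nv) + (α)*(β)*(a 2)*(b 0)*(nu)*(nv)) * hf1 +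
        ((-1)*(α)*(β)*(a 2)*(b 1)^2*(f 0)*(np)*(nq) + (-1)*(α)*(β)*(a 2)*(b 2)^2*(f 0)*(np)*(nq) + (α)*(β)*(a 2)*(b 0)*(b 1)*(f 1)*(np)*(nq) + (α)*(β)*(a 2)*(b 0)*(b 2)*(f 2)*(np)*(nq) + (α)*(β)*(b 1)*(e 2)*(f 0)*(f 1)*(nu)*(nv) + (-1)*(α)*(β)*(b 0)*(e 2)*(f 1)^2*(nu)*(nv) + (α)*(β)*(b 2)*(e 2)*(f 0)*(f 2)*(nu)*(nv) + (-1)*(α)*(β)*(b 0)*(e 2)*(f 2)^2*(nu)*(nv) + (α)*(β)*(a 0)*(f 2)*(np)*(nq) + (α)*(β)*(b 2)*(e 0)*(nu)*(nv) + (β)*(b 2)*(f 0)*(np)*(nq) + (-1)*(β)*(b 0)*(f 2)*(np)*(nq) + (-1)*(α)*(b 2)*(f 0)*(nu)*(nv) + (α)*(b 0)*(f 2)*(nu)*(nv)) * hae +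
        ((α)*(β)*(a 1)^2*(b 2)*(e 0)*(np)*(nq) + (α)*(β)*(a 2)^2*(b 2)*(e 0)*(np)*(nq) + (-1)*(α)*(β)*(a 0)*(a 1)*(b 2)*(e 1)*(np)*(nq) + (-1)*(α)*(β)*(a 0)*(a 2)*(b 2)*(e 2)*(np)*(nq) + (-1)*(α)*(β)*(a 1)*(e 0)*(e 1)*(f 2)*(nu)*(nv) + (α)*(β)*(a 0)*(e 1)^2*(f 2)*(nu)*(nv) + (-1)*(α)*(β)*(a 2)*(e 0)*(e 2)*(f 2)*(nu)*(nv) + (α)*(β)*(a 0)*(e 2)^2*(f 2)*(nu)*(nv) + (-1)*(α)*(β)*(b 0)*(e 2)*(np)*(nq) + (-1)*(α)*(β)*(a 2)*(f 0)*(nu)*(nv) + (-1)*(β)*(a 2)*(e 0)*(np)*(nq) + (β)*(a 0)*(e 2)*(np)*(nq) + (α)*(a 2)*(e 0)*(nu)*(nv) + (-1)*(α)*(a 0)*(e 2)*(nu)*(nv)) * hbf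
  · simp only [Mmat, cross3, dot3, Matrix.mulVec, dotProduct, Fin.sum_univ_four,
      Matrix.cons_val', Matrix.cons_val_zero, Matrix.cons_val_one, Matrix.head_cons,
      Matrix.empty_val', Matrix.cons_val_fin_one, Matrix.of_apply, Matrix.head_fin_const,
      Pi.sub_apply, Pi.smul_apply, Pi.add_apply, smul_eq_mul, Matrix.cons_val_two,
      Matrix.cons_val_three, Matrix.tail_cons, Fin.reduceFinMk, Fin.isValue, Fin.zero_eta,
      Fin.mk_one, Pi.zero_apply, hPa, hQb, hUe, hVf]
    linear_combination ((β)*(a 1)*(b 1)*(e 0)*(f 0)*(np)*(nq) + (β)*(a 2)*(b 2)*(e 0)*(f 0)*(np)*(nq) + (-1)*(β)*(a 0)*(b 1)*(e 1)*(f 0)*(np)*(nq) + (-1)*(β)*(a 0)*(b 2)*(e 2)*(f 0)*(np)*(nq) + (-1)*(β)*(a 1)*(b 0)*(e 0)*(f 1)*(np)*(nq) + (β)*(a 0)*(b 0)*(e 1)*(f 1)*(np)*(nq) + (β)*(a 2)*(b 2)*(e 1)*(f 1)*(np)*(nq) + (-1)*(β)*(a 1)*(b 2)*(e 2)*(f 1)*(np)*(nq)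 + (-1)*(β)*(a 2)*(b 0)*(e 0)*(f 2)*(np)*(nq) + (-1)*(β)*(a 2)*(b 1)*(e 1)*(f 2)*(np)*(nq) + (β)*(a 0)*(b 0)*(e 2)*(f 2)*(np)*(nq) + (β)*(a 1)*(b 1)*(e 2)*(f 2)*(np)*(nq) + (-1)*(a 0)*(b 0)*(np)*(nq) + (-1)*(a 1)*(b 1)*(np)*(nq) + (-1)*(a 2)*(b 2)*(np)*(nq)) * hα2 +
        ((α)*(a 1)*(b 1)*(e 0)*(f 0)*(nu)*(nv) + (α)*(a 2)*(b 2)*(e 0)*(f 0)*(nu)*(nv) + (-1)*(α)*(a 0)*(b 1)*(e 1)*(f 0)*(nu)*(nv) + (-1)*(α)*(a 0)*(b 2)*(e 2)*(f 0)*(nu)*(nv) + (-1)*(α)*(a 1)*(b 0)*(e 0)*(f 1)*(nu)*(nv) + (α)*(a 0)*(b 0)*(e 1)*(f 1)*(nu)*(nv) + (α)*(a 2)*(b 2)*(e 1)*(f 1)*(nu)*(nv) + (-1)*(α)*(a 1)*(b 2)*(e 2)*(f 1)*(nu)*(nv) + (-1)*(α)*(a 2)*(b 0)*(e 0)*(f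 2)*(nu)*(nv) + (-1)*(α)*(a 2)*(b 1)*(e 1)*(f 2)*(nu)*(nv) + (α)*(a 0)*(b 0)*(e 2)*(f 2)*(nu)*(nv) + (α)*(a 1)*(b 1)*(e 2)*(f 2)*(nu)*(nv) + (-1)*(e 0)*(f 0)*(nu)*(nv) + (-1)*(e 1)*(f 1)*(nu)*(nv) + (-1)*(e 2)*(f 2)*(nu)*(nv)) * hβ2 +
        ((-1)*(α)*(β)*(b 0)*(b 1)*(e 1)*(f 0)*(np)*(nq) + (-1)*(α)*(β)*(b 0)*(b 2)*(e 2)*(f 0)*(np)*(nq) + (α)*(β)*(b 0)^2*(e 1)*(f 1)*(np)*(nq) + (α)*(β)*(b 2)^2*(e 1)*(f 1)*(np)*(nq) + (-1)*(α)*(β)*(b 1)*(b 2)*(e 2)*(f 1)*(np)*(nq) + (-1)*(α)*(β)*(b 1)*(b 2)*(e 1)*(f 2)*(np)*(nq) + (α)*(β)*(b 0)^2*(e 2)*(f 2)*(np)*(nq) + (α)*(β)*(b 1)^2*(e 2)*(f 2)*(np)*(nq) + (α)*(β)*(e 0)*(f 0)*(np)*(nq) + (-1)*(α)*(b 0)^2*(np)*(nq)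 + (-1)*(α)*(b 1)^2*(np)*(nq) + (-1)*(α)*(b 2)^2*(np)*(nq)) * ha1 +
        ((α)*(β)*(a 1)^2*(e 0)*(f 0)*(np)*(nq) + (α)*(β)*(a 2)^2*(e 0)*(f 0)*(np)*(nq) + (-1)*(α)*(β)*(a 0)*(a 1)*(e 1)*(f 0)*(np)*(nq) + (-1)*(α)*(β)*(a 0)*(a 2)*(e 2)*(f 0)*(np)*(nq) + (-1)*(α)*(β)*(a 0)*(a 1)*(e 0)*(f 1)*(np)*(nq) + (-1)*(α)*(β)*(a 1)^2*(e 1)*(f 1)*(np)*(nq) + (-1)*(α)*(β)*(a 1)*(a 2)*(e 2)*(f 1)*(np)*(nq) + (-1)*(α)*(β)*(a 0)*(a 2)*(e 0)*(f 2)*(np)*(nq) + (-1)*(α)*(β)*(a 1)*(a 2)*(e 1)*(f 2)*(np)*(nq) + (-1)*(α)*(β)*(a 2)^2*(e 2)*(f 2)*(np)*(nq) + (α)*(β)*(e 1)*(f 1)*(np)*(nq) + (α)*(β)*(e 2)*(f 2)*(np)*(nq) + (-1)*(α)*(np)*(nq)) * hb1 +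
        ((α)*(β)*(a 1)*(b 1)*(f 0)^2*(nu)*(nv) + (α)*(β)*(a 2)*(b 2)*(f 0)^2*(nu)*(nv) + (-1)*(α)*(β)*(a 1)*(b 0)*(f 0)*(f 1)*(nu)*(nv) + (α)*(β)*(a 2)*(b 2)*(f 1)^2*(nu)*(nv) + (-1)*(α)*(β)*(a 2)*(b 0)*(f 0)*(f 2)*(nu)*(nv) + (-1)*(α)*(β)*(a 2)*(b 1)*(f 1)*(f 2)*(nu)*(nv) + (-1)*(α)*(β)*(a 1)*(b 2)*(f 1)*(f 2)*(nu)*(nv) + (α)*(β)*(a 1)*(b 1)*(f 2)^2*(nu)*(nv) + (α)*(β)*(a 0)*(b 0)*(nu)*(nv) + (-1)*(β)*(f 0)^2*(nu)*(nv) + (-1)*(β)*(f 1)^2*(nu)*(nv) + (-1)*(β)*(f 2)^2*(nu)*(nv)) * he1 +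
        ((-1)*(α)*(β)*(a 1)*(b 0)*(e 0)*(e 1)*(nu)*(nv) + (-1)*(α)*(β)*(a 0)*(b 1)*(e 0)*(e 1)*(nu)*(nv) + (α)*(β)*(a 0)*(b 0)*(e 1)^2*(nu)*(nv) + (-1)*(α)*(β)*(a 1)*(b 1)*(e 1)^2*(nu)*(nv) + (-1)*(α)*(β)*(a 2)*(b 0)*(e 0)*(e 2)*(nu)*(nv) + (-1)*(α)*(β)*(a 0)*(b 2)*(e 0)*(e 2)*(nu)*(nv) + (-1)*(α)*(β)*(a 2)*(b 1)*(e 1)*(e 2)*(nu)*(nv) + (-1)*(α)*(β)*(a 1)*(b 2)*(e 1)*(e 2)*(nu)*(nv) + (α)*(β)*(a 0)*(b 0)*(e 2)^2*(nu)*(nv) + (-1)*(α)*(β)*(a 2)*(b 2)*(e 2)^2*(nu)*(nv) + (α)*(β)*(a 1)*(b 1)*(nu)*(nv) + (α)*(β)*(a 2)*(b 2)*(nu)*(nv) + (-1)*(β)*(nu)*(nv)) * hf1 +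
        ((α)*(β)*(a 1)*(b 0)*(b 1)*(f 0)*(np)*(nq) + (α)*(β)*(a 2)*(b 0)*(b 2)*(f 0)*(np)*(nq) + (α)*(β)*(a 1)*(b 1)^2*(f 1)*(np)*(nq) + (α)*(β)*(a 2)*(b 1)*(b 2)*(f 1)*(np)*(nq) + (α)*(β)*(a 1)*(b 1)*(b 2)*(f 2)*(np)*(nq) + (α)*(β)*(a 2)*(b 2)^2*(f 2)*(np)*(nq) + (α)*(β)*(b 0)*(e 1)*(f 0)*(f 1)*(nu)*(nv) + (α)*(β)*(b 1)*(e 1)*(f 1)^2*(nu)*(nv) + (α)*(β)*(b 0)*(e 2)*(f 0)*(f 2)*(nu)*(nv) + (α)*(β)*(b 2)*(e 1)*(f 1)*(f 2)*(nu)*(nv) + (α)*(β)*(b 1)*(e 2)*(f 1)*(f 2)*(nu)*(nv) + (α)*(β)*(b 2)*(e 2)*(f 2)^2*(nu)*(nv) + (-1)*(α)*(β)*(a 0)*(f 0)*(np)*(nq) + (-1)*(α)*(β)*(a 1)*(f 1)*(np)*(nq) + (-1)*(α)*(β)*(a 2)*(f 2)*(np)*(nq) + (-1)*(α)*(β)*(b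 0)*(e 0)*(nu)*(nv) + (-1)*(α)*(β)*(b 1)*(e 1)*(nu)*(nv) + (-1)*(α)*(β)*(b 2)*(e 2)*(nu)*(nv) + (-1)*(β)*(b 0)*(f 0)*(np)*(nq) + (-1)*(β)*(b 1)*(f 1)*(np)*(nq) + (-1)*(β)*(b 2)*(f 2)*(np)*(nq) + (-1)*(α)*(b 0)*(f 0)*(nu)*(nv) + (-1)*(α)*(b 1)*(f 1)*(nu)*(nv) + (-1)*(α)*(b 2)*(f 2)*(nu)*(nv)) * hae +
        ((-1)*(α)*(β)*(a 1)^2*(b 0)*(e 0)*(np)*(nq) + (-1)*(α)*(β)*(a 2)^2*(b 0)*(e 0)*(np)*(nq) + (α)*(β)*(a 0)*(a 1)*(b 0)*(e 1)*(np)*(nq) + (α)*(β)*(a 0)*(a 2)*(b 0)*(e 2)*(np)*(nq) + (α)*(β)*(a 1)*(e 0)*(e 1)*(f 0)*(nu)*(nv) + (-1)*(α)*(β)*(a 0)*(e 1)^2*(f 0)*(nu)*(nv) + (α)*(β)*(a 2)*(e 0)*(e 2)*(f 0)*(nu)*(nv) + (-1)*(α)*(β)*(a 0)*(e 2)^2*(f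 0)*(nu)*(nv) + (-1)*(α)*(β)*(b 1)*(e 1)*(np)*(nq) + (-1)*(α)*(β)*(b 2)*(e 2)*(np)*(nq) + (-1)*(α)*(β)*(a 1)*(f 1)*(nu)*(nv) + (-1)*(α)*(β)*(a 2)*(f 2)*(nu)*(nv)) * hbf
end

section
/- Let P, Q ∈ ℝ³ be nonzero vectors, let U, V ∈ ℝ³ satisfy ‖U‖‖V‖ = 0 (i.e. U = 0 or V = 0) together with P·U = 0 and Q·V = 0, let c ∈ ℝ, α ∈ {−1,1}, and fix an index j ∈ {1,2,3}. Write X̂ = X/‖X‖. Define the vectors w¹ = (P̂₂P̂_j − Q̂₂Q̂_j − α(P̂₂Q̂_j − P̂_jQ̂₂), 0, −P̂₃P̂_j + Q̂₃Q̂_j + α(P̂₃Q̂_j − P̂_jQ̂₃), −P̂₁P̂_j − Q̂₁Q̂_j + α(P̂₁Q̂_j + P̂_jQ̂₁)) and w² = (0, P̂₂P̂_j − Q̂₂Q̂_j − α(P̂₂Q̂_j − P̂_jQ̂₂), −P̂₁P̂_j + Q̂₁Q̂_j + α(P̂₁Q̂_j − P̂_jQ̂₁), P̂₃P̂_j + Q̂₃Q̂_j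 − α(P̂₃Q̂_j + P̂_jQ̂₃)) in ℝ⁴. Then M(P,Q,U,V,c)·wⁱ = (c − α‖P‖‖Q‖)·wⁱ for i = 1, 2. -/
open Matrix

/-- in the toroidal case `‖U‖‖V‖ = 0`, for each index `j` the two vectors
`w¹, w²` built from the normalized vectors `P̂, Q̂` (components indexed `1,2,3` in the
paper, `0,1,2` here, so `P̂₁ = p 0` etc.) satisfy `M wⁱ = (c − α‖P‖‖Q‖) wⁱ`. -/
theorem statement11 (P Q U V : Fin 3 → ℝ) (hP : P ≠ 0) (hQ : Q ≠ 0)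
    (hUV : norm3 U * norm3 V = 0) (hPU : dot3 P U = 0) (hQV : dot3 Q V = 0)
    (c : ℝ) (α : ℝ) (hα : α = -1 ∨ α = 1) (j : Fin 3)
    (p q : Fin 3 → ℝ) (hp : p = nz3 P) (hq : q = nz3 Q)
    (w₁ w₂ : Fin 4 → ℝ)
    (hw₁ : w₁ = ![p 1 * p j - q 1 * q j - α * (p 1 * q j - p j * q 1),
                  0,
                  -(p 2 * p j) + q 2 * q j + α * (p 2 * q j - p j * q 2),
                  -(p 0 * p j) - q 0 * q j + α * (p 0 * q j + p j * q 0)])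
    (hw₂ : w₂ = ![0,
                  p 1 * p j - q 1 * q j - α * (p 1 * q j - p j * q 1),
                  -(p 0 * p j) + q 0 * q j + α * (p 0 * q j - p j * q 0),
                  p 2 * p j + q 2 * q j - α * (p 2 * q j + p j * q 2)]) :
    (Mmat P Q U V c).mulVec w₁ = (c - α * (norm3 P * norm3 Q)) • w₁
    ∧ (Mmat P Q U V c).mulVec w₂ = (c - α * (norm3 P * norm3 Q)) • w₂ := by

  have h3 : ∀ (X : Fin 3 → ℝ), norm3 X = 0 → ∀ i, X i = 0 := by
    intro X hX i
    have hle : X 0 ^ 2 + X 1 ^ 2 + X 2 ^ 2 ≤ 0 := Real.sqrt_eq_zero'.mp hX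
    have h0 : X 0 = 0 := by nlinarith [sq_nonneg (X 0), sq_nonneg (X 1), sq_nonneg (X 2)]
    have h1 : X 1 = 0 := by nlinarith [sq_nonneg (X 0), sq_nonneg (X 1), sq_nonneg (X 2)]
    have h2 : X 2 = 0 := by nlinarith [sq_nonneg (X 0), sq_nonneg (X 1), sq_nonneg (X 2)]
    fin_cases i <;> simp [h0, h1, h2]
  have hUV0 : ∀ i k : Fin 3, U i * V k = 0 := by
    rcases mul_eq_zero.mp hUV with h | h <;> intro i k
    · rw [h3 U h i]; ring
    · rw [h3 V h k]; ring
  have hsP : norm3 P ≠ 0 := by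
    intro h; exact hP (funext fun i => h3 P h i)
  have hsQ : norm3 Q ≠ 0 := by
    intro h; exact hQ (funext fun i => h3 Q h i)
  have hPsq : P 0 ^ 2 + P 1 ^ 2 + P 2 ^ 2 = norm3 P ^ 2 :=
    (Real.sq_sqrt (by positivity)).symm
  have hQsq : Q 0 ^ 2 + Q 1 ^ 2 + Q 2 ^ 2 = norm3 Q ^ 2 :=
    (Real.sq_sqrt (by positivity)).symm
  have hpi : ∀ i, P i = norm3 P * p i := by
    intro i; rw [hp]; simp [nz3]; field_simp
  have hqi : ∀ i, Q i = norm3 Q * q i := by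
    intro i; rw [hq]; simp [nz3]; field_simp
  have hpu : p 0 ^ 2 + p 1 ^ 2 + p 2 ^ 2 = 1 := by
    have h0 := hpi 0; have h1 := hpi 1; have h2 := hpi 2
    have e : (norm3 P * p 0) ^ 2 + (norm3 P * p 1) ^ 2 + (norm3 P * p 2) ^ 2 = norm3 P ^ 2 := by
      rw [← h0, ← h1, ← h2]; exact hPsq
    have key : norm3 P ^ 2 * (p 0 ^ 2 + p 1 ^ 2 + p 2 ^ 2) = norm3 P ^ 2 * 1 := by
      linear_combination e
    exact mul_left_cancel₀ (pow_ne_zero 2 hsP) key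
  have hqu : q 0 ^ 2 + q 1 ^ 2 + q 2 ^ 2 = 1 := by
    have h0 := hqi 0; have h1 := hqi 1; have h2 := hqi 2
    have e : (norm3 Q * q 0) ^ 2 + (norm3 Q * q 1) ^ 2 + (norm3 Q * q 2) ^ 2 = norm3 Q ^ 2 := by
      rw [← h0, ← h1, ← h2]; exact hQsq
    have key : norm3 Q ^ 2 * (q 0 ^ 2 + q 1 ^ 2 + q 2 ^ 2) = norm3 Q ^ 2 * 1 := by
      linear_combination e
    exact mul_left_cancel₀ (pow_ne_zero 2 hsQ) key
  have hα2 : α ^ 2 = 1 := by rcases hα with h | h <;> rw [h] <;> norm_num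
  constructor
  · funext i
    fin_cases i
    · simp only [Mmat, Matrix.mulVec, hw₁, dotProduct, Fin.sum_univ_four, cross3, dot3,
        Pi.add_apply, Pi.smul_apply, smul_eq_mul, Matrix.cons_val', Matrix.cons_val_zero,
        Matrix.cons_val_one, Matrix.head_cons, Matrix.empty_val', Matrix.cons_val_fin_one,
        Matrix.head_fin_const, Matrix.of_apply, Matrix.cons_val_two, Matrix.cons_val_three,
        Matrix.tail_cons, Fin.zero_eta, Fin.mk_one, Fin.reduceFinMk, Fin.isValue]
      rw [hpi 0, hpi 1, hpi 2, hqi 0, hqi 1, hqi 2]; simp only [hUV0]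
      linear_combination (norm3 P * norm3 Q) * ((α * q 1 * q j - q 1 * p j) * hpu + (p 1 * q j - α * p 1 * p j) * hqu + (q 1 * p j - p 1 * q j) * hα2)
    · simp only [Mmat, Matrix.mulVec, hw₁, dotProduct, Fin.sum_univ_four, cross3, dot3,
        Pi.add_apply, Pi.smul_apply, smul_eq_mul, Matrix.cons_val', Matrix.cons_val_zero,
        Matrix.cons_val_one, Matrix.head_cons, Matrix.empty_val', Matrix.cons_val_fin_one,
        Matrix.head_fin_const, Matrix.of_apply, Matrix.cons_val_two, Matrix.cons_val_three,
        Matrix.tail_cons, Fin.zero_eta, Fin.mk_one, Fin.reduceFinMk, Fin.isValue]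
      rw [hpi 0, hpi 1, hpi 2, hqi 0, hqi 1, hqi 2]; simp only [hUV0]
      ring_nf
    · simp only [Mmat, Matrix.mulVec, hw₁, dotProduct, Fin.sum_univ_four, cross3, dot3,
        Pi.add_apply, Pi.smul_apply, smul_eq_mul, Matrix.cons_val', Matrix.cons_val_zero,
        Matrix.cons_val_one, Matrix.head_cons, Matrix.empty_val', Matrix.cons_val_fin_one,
        Matrix.head_fin_const, Matrix.of_apply, Matrix.cons_val_two, Matrix.cons_val_three,
        Matrix.tail_cons, Fin.zero_eta, Fin.mk_one, Fin.reduceFinMk, Fin.isValue]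
      rw [hpi 0, hpi 1, hpi 2, hqi 0, hqi 1, hqi 2]; simp only [hUV0]
      linear_combination (norm3 P * norm3 Q) * ((q 2 * p j - α * q 2 * q j) * hpu + (α * p 2 * p j - p 2 * q j) * hqu + (p 2 * q j - q 2 * p j) * hα2)
    · simp only [Mmat, Matrix.mulVec, hw₁, dotProduct, Fin.sum_univ_four, cross3, dot3,
        Pi.add_apply, Pi.smul_apply, smul_eq_mul, Matrix.cons_val', Matrix.cons_val_zero,
        Matrix.cons_val_one, Matrix.head_cons, Matrix.empty_val', Matrix.cons_val_fin_one,
        Matrix.head_fin_const, Matrix.of_apply, Matrix.cons_val_two, Matrix.cons_val_three,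
        Matrix.tail_cons, Fin.zero_eta, Fin.mk_one, Fin.reduceFinMk, Fin.isValue]
      rw [hpi 0, hpi 1, hpi 2, hqi 0, hqi 1, hqi 2]; simp only [hUV0]
      linear_combination (norm3 P * norm3 Q) * ((α * q 0 * q j - q 0 * p j) * hpu + (α * p 0 * p j - p 0 * q j) * hqu + (q 0 * p j + p 0 * q j) * hα2)
  · funext i
    fin_cases i
    · simp only [Mmat, Matrix.mulVec, hw₂, dotProduct, Fin.sum_univ_four, cross3, dot3,
        Pi.add_apply, Pi.smul_apply, smul_eq_mul, Matrix.cons_val', Matrix.cons_val_zero,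
        Matrix.cons_val_one, Matrix.head_cons, Matrix.empty_val', Matrix.cons_val_fin_one,
        Matrix.head_fin_const, Matrix.of_apply, Matrix.cons_val_two, Matrix.cons_val_three,
        Matrix.tail_cons, Fin.zero_eta, Fin.mk_one, Fin.reduceFinMk, Fin.isValue]
      rw [hpi 0, hpi 1, hpi 2, hqi 0, hqi 1, hqi 2]; simp only [hUV0]
      ring_nf
    · simp only [Mmat, Matrix.mulVec, hw₂, dotProduct, Fin.sum_univ_four, cross3, dot3,
        Pi.add_apply, Pi.smul_apply, smul_eq_mul, Matrix.cons_val', Matrix.cons_val_zero,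
        Matrix.cons_val_one, Matrix.head_cons, Matrix.empty_val', Matrix.cons_val_fin_one,
        Matrix.head_fin_const, Matrix.of_apply, Matrix.cons_val_two, Matrix.cons_val_three,
        Matrix.tail_cons, Fin.zero_eta, Fin.mk_one, Fin.reduceFinMk, Fin.isValue]
      rw [hpi 0, hpi 1, hpi 2, hqi 0, hqi 1, hqi 2]; simp only [hUV0]
      linear_combination (norm3 P * norm3 Q) * ((α * q 1 * q j - q 1 * p j) * hpu + (p 1 * q j - α * p 1 * p j) * hqu + (q 1 * p j - p 1 * q j) * hα2)
    · simp only [Mmat, Matrix.mulVec, hw₂, dotProduct, Fin.sum_univ_four, cross3, dot3,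
        Pi.add_apply, Pi.smul_apply, smul_eq_mul, Matrix.cons_val', Matrix.cons_val_zero,
        Matrix.cons_val_one, Matrix.head_cons, Matrix.empty_val', Matrix.cons_val_fin_one,
        Matrix.head_fin_const, Matrix.of_apply, Matrix.cons_val_two, Matrix.cons_val_three,
        Matrix.tail_cons, Fin.zero_eta, Fin.mk_one, Fin.reduceFinMk, Fin.isValue]
      rw [hpi 0, hpi 1, hpi 2, hqi 0, hqi 1, hqi 2]; simp only [hUV0]
      linear_combination (norm3 P * norm3 Q) * ((q 0 * p j - α * q 0 * q j) * hpu + (α * p 0 * p j - p 0 * q j) * hqu + (p 0 * q j - q 0 * p j) * hα2)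
    · simp only [Mmat, Matrix.mulVec, hw₂, dotProduct, Fin.sum_univ_four, cross3, dot3,
        Pi.add_apply, Pi.smul_apply, smul_eq_mul, Matrix.cons_val', Matrix.cons_val_zero,
        Matrix.cons_val_one, Matrix.head_cons, Matrix.empty_val', Matrix.cons_val_fin_one,
        Matrix.head_fin_const, Matrix.of_apply, Matrix.cons_val_two, Matrix.cons_val_three,
        Matrix.tail_cons, Fin.zero_eta, Fin.mk_one, Fin.reduceFinMk, Fin.isValue]
      rw [hpi 0, hpi 1, hpi 2, hqi 0, hqi 1, hqi 2]; simp only [hUV0]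
      linear_combination (norm3 P * norm3 Q) * ((q 2 * p j - α * q 2 * q j) * hpu + (p 2 * q j - α * p 2 * p j) * hqu + (-(q 2 * p j) - p 2 * q j) * hα2)
end

section
/- Let a, b ∈ ℝ with 0 < a < b, and let c ∈ ℝ with b − a + c ≥ 0 and a + b + c ≥ 0. For α ∈ [0, 2π), h ∈ [−1, 1] and σ ∈ {−1, 1}, set u = √((b−a+c)/(2b)) cos α, v = √((b−a+c)/(2(b−a))) sin α, and k = √((a+b+c)/(2(a h² + (a(1−h²)+b)u² + (b − a h²)v²))), assuming the expression inside this last square root has positive denominator. Define x = u k, y = h k √(1 − u² − v²), z = v k, and w = σ√(1 − k²(h² + (1−h²)(u² + v²))), assuming 1 − u² − v² ≥ 0 and 1 − k²(h² + (1−h²)(u² + v²)) ≥ 0. Then (x, y, z, w) satisfies (a+b)x² + (a−b)y² + (−a+b)z² + (−a−b)w² = c and x² + y² + z² + w² = 1. -/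
/-!
Only the squares of the coordinates enter, and both equations are linear in them. The scale `k`
is chosen so that `k²` times the quadratic form in the denominator equals `a + b + c`; with
`σ² = 1` and the two square roots squared away, each equation becomes a linear combination of
that relation and the defining equations of `y²` and `w²`.
-/

open Real

lemma sq_sqrt_div_mul_cancel {p q : ℝ} (hp : 0 ≤ p) (hq : 0 < q) : √(p / q) ^ 2 * q = p := by
  rw [sq_sqrt (div_nonneg hp hq.le), div_mul_cancel₀ _ hq.ne']

lemma sq_mul_sqrt {s t : ℝ} (ht : 0 ≤ t) : (s * √t) ^ 2 = s ^ 2 * t := by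
  rw [mul_pow, sq_sqrt ht]

theorem statement15_general (a b c : ℝ)
    (h2 : 0 ≤ a + b + c)
    (h σ : ℝ)
    (hσ : σ = -1 ∨ σ = 1)
    (u v k x y z w : ℝ)
    (hden : 0 < 2 * (a * h ^ 2 + (a * (1 - h ^ 2) + b) * u ^ 2 + (b - a * h ^ 2) * v ^ 2))
    (hk : k = Real.sqrt ((a + b + c)
        / (2 * (a * h ^ 2 + (a * (1 - h ^ 2) + b) * u ^ 2 + (b - a * h ^ 2) * v ^ 2))))
    (huv : 0 ≤ 1 - u ^ 2 - v ^ 2)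
    (hx : x = u * k)
    (hy : y = h * k * Real.sqrt (1 - u ^ 2 - v ^ 2))
    (hz : z = v * k)
    (hw0 : 0 ≤ 1 - k ^ 2 * (h ^ 2 + (1 - h ^ 2) * (u ^ 2 + v ^ 2)))
    (hw : w = σ * Real.sqrt (1 - k ^ 2 * (h ^ 2 + (1 - h ^ 2) * (u ^ 2 + v ^ 2)))) :
    (a + b) * x ^ 2 + (a - b) * y ^ 2 + (-a + b) * z ^ 2 + (-a - b) * w ^ 2 = c
    ∧ x ^ 2 + y ^ 2 + z ^ 2 + w ^ 2 = 1 := by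
  have hσ2 : σ ^ 2 = 1 := by rcases hσ with rfl | rfl <;> norm_num
  have hk2 : k ^ 2 * (2 * (a * h ^ 2 + (a * (1 - h ^ 2) + b) * u ^ 2 + (b - a * h ^ 2) * v ^ 2))
      = a + b + c := hk ▸ sq_sqrt_div_mul_cancel h2 hden
  have hy2 : y ^ 2 = h ^ 2 * k ^ 2 * (1 - u ^ 2 - v ^ 2) := by
    rw [hy, sq_mul_sqrt huv, mul_pow]
  have hw2 : w ^ 2 = 1 - k ^ 2 * (h ^ 2 + (1 - h ^ 2) * (u ^ 2 + v ^ 2)) := by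
    rw [hw, sq_mul_sqrt hw0, hσ2, one_mul]
  subst hx hz
  exact ⟨by linear_combination hk2 + (a - b) * hy2 + (-a - b) * hw2,
    by linear_combination hy2 + hw2⟩

/-- the y-barrel parameterization satisfies the diagonalized spin-quadric
system. -/
theorem statement15 (a b c : ℝ) (ha : 0 < a) (hab : a < b)
    (h1 : 0 ≤ b - a + c) (h2 : 0 ≤ a + b + c)
    (α h σ : ℝ) (hα : α ∈ Set.Ico (0 : ℝ) (2 * π)) (hh : h ∈ Set.Icc (-1 : ℝ) 1)
    (hσ : σ = -1 ∨ σ = 1)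
    (u v k x y z w : ℝ)
    (hu : u = Real.sqrt ((b - a + c) / (2 * b)) * Real.cos α)
    (hv : v = Real.sqrt ((b - a + c) / (2 * (b - a))) * Real.sin α)
    (hden : 0 < 2 * (a * h ^ 2 + (a * (1 - h ^ 2) + b) * u ^ 2 + (b - a * h ^ 2) * v ^ 2))
    (hk : k = Real.sqrt ((a + b + c)
        / (2 * (a * h ^ 2 + (a * (1 - h ^ 2) + b) * u ^ 2 + (b - a * h ^ 2) * v ^ 2))))
    (huv : 0 ≤ 1 - u ^ 2 - v ^ 2)
    (hx : x = u * k)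
    (hy : y = h * k * Real.sqrt (1 - u ^ 2 - v ^ 2))
    (hz : z = v * k)
    (hw0 : 0 ≤ 1 - k ^ 2 * (h ^ 2 + (1 - h ^ 2) * (u ^ 2 + v ^ 2)))
    (hw : w = σ * Real.sqrt (1 - k ^ 2 * (h ^ 2 + (1 - h ^ 2) * (u ^ 2 + v ^ 2)))) :
    (a + b) * x ^ 2 + (a - b) * y ^ 2 + (-a + b) * z ^ 2 + (-a - b) * w ^ 2 = c
    ∧ x ^ 2 + y ^ 2 + z ^ 2 + w ^ 2 = 1 :=
  statement15_general a b c h2 h σ hσ u v k x y z w hden hk huv hx hy hz hw0 hw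
end

section
/- Let a, b ∈ ℝ with a > 0 and b > 0, and let c ∈ ℝ with a + b − c ≥ 0 and a + b + c ≥ 0. For α ∈ [0, 2π), h ∈ [0, 1] and σ, τ ∈ {−1, 1}, set u = √((a+b−c)/(2b)) cos α, v = √((a+b−c)/(2a)) sin α, and k = √((a+b+c)/(2(a + b − (a(1−h²)+b)u² − (b(1−h²)+a)v²))), assuming the expression inside this last square root has positive denominator. Define x = σ k √(1 − u² − v²), y = h k u, z = h k v, and w = τ√(1 − k²(1 − (1−h²)(u² + v²))), assuming 1 − u² − v² ≥ 0 and 1 − k²(1 − (1−h²)(u² + v²)) ≥ 0. Then (x, y, z, w) satisfies (a+b)x² + (a−b)y² + (−a+b)z² + (−a−b)w² = c and x² + y² + z² + w² = 1. -/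
open Real

/-! Every coordinate enters only through its square, and with `x² = k²(1 - u² - v²)`,
`y² = h²k²u²`, `z² = h²k²v²`, `w² = 1 - k²(1 - (1 - h²)(u² + v²))` the sphere equation is a
polynomial identity, while the quadric collapses to `k² · 2D - (a + b) = c`, where `2D` is the
denominator under the square root defining `k`. -/

theorem sq_mul_sqrt_of_sq_eq_one {σ t : ℝ} (hσ : σ ^ 2 = 1) (ht : 0 ≤ t) :
    (σ * √t) ^ 2 = t := by
  rw [mul_pow, hσ, one_mul, sq_sqrt ht]

theorem spinQuadric_of_sq_eq {a b c h k u v x y z w : ℝ}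
    (hx : x ^ 2 = k ^ 2 * (1 - u ^ 2 - v ^ 2))
    (hy : y ^ 2 = h ^ 2 * k ^ 2 * u ^ 2)
    (hz : z ^ 2 = h ^ 2 * k ^ 2 * v ^ 2)
    (hw : w ^ 2 = 1 - k ^ 2 * (1 - (1 - h ^ 2) * (u ^ 2 + v ^ 2)))
    (hk : k ^ 2 * (2 * (a + b - (a * (1 - h ^ 2) + b) * u ^ 2 - (b * (1 - h ^ 2) + a) * v ^ 2))
      = a + b + c) :
    (a + b) * x ^ 2 + (a - b) * y ^ 2 + (-a + b) * z ^ 2 + (-a - b) * w ^ 2 = c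
    ∧ x ^ 2 + y ^ 2 + z ^ 2 + w ^ 2 = 1 :=
  ⟨by linear_combination (a + b) * hx + (a - b) * hy + (-a + b) * hz + (-a - b) * hw + hk,
    by linear_combination hx + hy + hz + hw⟩

theorem statement16_general (a b c : ℝ)
    (h2 : 0 ≤ a + b + c)
    (h σ τ : ℝ)
    (hσ : σ = -1 ∨ σ = 1) (hτ : τ = -1 ∨ τ = 1)
    (u v k x y z w : ℝ)
    (hden : 0 < 2 * (a + b - (a * (1 - h ^ 2) + b) * u ^ 2 - (b * (1 - h ^ 2) + a) * v ^ 2))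
    (hk : k = Real.sqrt ((a + b + c)
        / (2 * (a + b - (a * (1 - h ^ 2) + b) * u ^ 2 - (b * (1 - h ^ 2) + a) * v ^ 2))))
    (huv : 0 ≤ 1 - u ^ 2 - v ^ 2)
    (hx : x = σ * k * Real.sqrt (1 - u ^ 2 - v ^ 2))
    (hy : y = h * k * u)
    (hz : z = h * k * v)
    (hw0 : 0 ≤ 1 - k ^ 2 * (1 - (1 - h ^ 2) * (u ^ 2 + v ^ 2)))
    (hw : w = τ * Real.sqrt (1 - k ^ 2 * (1 - (1 - h ^ 2) * (u ^ 2 + v ^ 2)))) :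
    (a + b) * x ^ 2 + (a - b) * y ^ 2 + (-a + b) * z ^ 2 + (-a - b) * w ^ 2 = c
    ∧ x ^ 2 + y ^ 2 + z ^ 2 + w ^ 2 = 1 := by
  have hk2 := hk ▸ sq_sqrt (div_nonneg h2 hden.le)
  refine spinQuadric_of_sq_eq ?_ (by rw [hy]; ring) (by rw [hz]; ring)
    (hw ▸ sq_mul_sqrt_of_sq_eq_one (sq_eq_one_iff.2 hτ.symm) hw0)
    (by rw [hk2, div_mul_cancel₀ _ hden.ne'])
  rw [hx, mul_right_comm, mul_pow, sq_mul_sqrt_of_sq_eq_one (sq_eq_one_iff.2 hσ.symm) huv,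
    mul_comm]

/-- the yz-caps parameterization satisfies the diagonalized spin-quadric
system. -/
theorem statement16 (a b c : ℝ) (ha : 0 < a) (hb : 0 < b)
    (h1 : 0 ≤ a + b - c) (h2 : 0 ≤ a + b + c)
    (α h σ τ : ℝ) (hα : α ∈ Set.Ico (0 : ℝ) (2 * π)) (hh : h ∈ Set.Icc (0 : ℝ) 1)
    (hσ : σ = -1 ∨ σ = 1) (hτ : τ = -1 ∨ τ = 1)
    (u v k x y z w : ℝ)
    (hu : u = Real.sqrt ((a + b - c) / (2 * b)) * Real.cos α)
    (hv : v = Real.sqrt ((a + b - c) / (2 * a)) * Real.sin α)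
    (hden : 0 < 2 * (a + b - (a * (1 - h ^ 2) + b) * u ^ 2 - (b * (1 - h ^ 2) + a) * v ^ 2))
    (hk : k = Real.sqrt ((a + b + c)
        / (2 * (a + b - (a * (1 - h ^ 2) + b) * u ^ 2 - (b * (1 - h ^ 2) + a) * v ^ 2))))
    (huv : 0 ≤ 1 - u ^ 2 - v ^ 2)
    (hx : x = σ * k * Real.sqrt (1 - u ^ 2 - v ^ 2))
    (hy : y = h * k * u)
    (hz : z = h * k * v)
    (hw0 : 0 ≤ 1 - k ^ 2 * (1 - (1 - h ^ 2) * (u ^ 2 + v ^ 2)))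
    (hw : w = τ * Real.sqrt (1 - k ^ 2 * (1 - (1 - h ^ 2) * (u ^ 2 + v ^ 2)))) :
    (a + b) * x ^ 2 + (a - b) * y ^ 2 + (-a + b) * z ^ 2 + (-a - b) * w ^ 2 = c
    ∧ x ^ 2 + y ^ 2 + z ^ 2 + w ^ 2 = 1 :=
  statement16_general a b c h2 h σ τ hσ hτ u v k x y z w hden hk huv hx hy hz hw0 hw
end
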